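/- arXiv:2104.12942 — 9 statements merged into one kernel-verified Lean document; each statement's English description precedes it below -/
import Mathlib

section
/- Let p be a prime and m, k positive integers. Then gcd(p^k+1, p^m-1) equals (2^gcd(2k,m)-1)/(2^gcd(k,m)-1) if p = 2; equals 2 if p is odd and v_2(m) ≤ v_2(k); and equals p^gcd(k,m)+1 if p is odd and v_2(m) > v_2(k), where v_2 denotes the 2-adic valuation. -/
/-!
Let `g = gcd k m`. Since `p ^ k + 1 ∣ p ^ (2 * k) - 1` and
`gcd (p ^ a - 1) (p ^ b - 1) = p ^ gcd a b - 1`, the gcd in question equals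
`gcd (p ^ k + 1) (p ^ G - 1)` with `G = gcd (2 * k) m`.

If `v₂ m ≤ v₂ k` then `G = g`, and `p ^ k ≡ 1` modulo `p ^ g - 1` because `g ∣ k`, so the gcd is
`gcd 2 (p ^ g - 1)`: `1` for `p = 2`, `2` for odd `p`.

If `v₂ k < v₂ m` then `G = 2 * g` and `k / g` is odd, so with `x = p ^ g` we have `x ^ (k / g) ≡ x`
modulo `x ^ 2 - 1`, and the gcd is `gcd (x + 1) (x ^ 2 - 1) = x + 1`.
-/

namespace Nat

lemma sq_sub_one (x : ℕ) : x ^ 2 - 1 = (x + 1) * (x - 1) := by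
  simpa using sq_sub_sq x 1

lemma pow_add_one_gcd_sub_one {x : ℕ} (hx : 0 < x) (n : ℕ) :
    gcd (x ^ n + 1) (x - 1) = gcd 2 (x - 1) := by
  have h : x ^ n + 1 ≡ 2 [MOD x - 1] := by
    simpa using ((modEq_sub hx).pow n).add_right 1
  exact h.gcd_eq

lemma pow_add_one_gcd_sq_sub_one {n : ℕ} (hn : Odd n) (x : ℕ) :
    gcd (x ^ n + 1) (x ^ 2 - 1) = x + 1 := by
  obtain ⟨j, rfl⟩ := hn
  rcases x.eq_zero_or_pos with rfl | hx
  · simp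
  have h : x ^ (2 * j + 1) + 1 ≡ x + 1 [MOD x ^ 2 - 1] := by
    have := (((modEq_sub (one_le_pow 2 x hx)).pow j).mul_right x).add_right 1
    simpa [← pow_mul, ← pow_succ] using this
  rw [h.gcd_eq, sq_sub_one]
  exact gcd_eq_left (dvd_mul_right _ _)

lemma pow_add_one_gcd_pow_sub_one (a k m : ℕ) :
    gcd (a ^ k + 1) (a ^ m - 1) = gcd (a ^ k + 1) (a ^ gcd (2 * k) m - 1) := by
  have h : a ^ k + 1 ∣ a ^ (2 * k) - 1 := by
    rw [mul_comm, pow_mul, sq_sub_one]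
    exact dvd_mul_right _ _
  rw [← pow_sub_one_gcd_pow_sub_one, ← gcd_assoc, gcd_eq_left h]

lemma padicValNat_gcd {q k m : ℕ} [Fact q.Prime] (hk : k ≠ 0) (hm : m ≠ 0) :
    padicValNat q (gcd k m) = min (padicValNat q k) (padicValNat q m) := by
  simp only [← factorization_def _ Fact.out, factorization_gcd hk hm, Finsupp.inf_apply]

lemma gcd_two_mul_left_of_padicValNat_le {k m : ℕ} (hk : k ≠ 0) (hm : m ≠ 0)
    (h : padicValNat 2 m ≤ padicValNat 2 k) : gcd (2 * k) m = gcd k m := by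
  apply eq_of_factorization_eq (gcd_ne_zero_right hm) (gcd_ne_zero_right hm)
  intro q
  rw [factorization_gcd (by positivity) hm, factorization_gcd hk hm,
    factorization_mul two_ne_zero hk, prime_two.factorization]
  simp only [Finsupp.inf_apply, Finsupp.add_apply, Finsupp.single_apply]
  split_ifs with hq
  · subst hq
    simp only [factorization_def _ prime_two]
    omega
  · simp

lemma gcd_two_mul_left_of_padicValNat_lt {k m : ℕ} (hk : k ≠ 0) (hm : m ≠ 0)
    (h : padicValNat 2 k < padicValNat 2 m) : gcd (2 * k) m = 2 * gcd k m := by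
  apply eq_of_factorization_eq (gcd_ne_zero_right hm) (by positivity)
  intro q
  rw [factorization_gcd (by positivity) hm, factorization_mul two_ne_zero (gcd_ne_zero_right hm),
    factorization_gcd hk hm, factorization_mul two_ne_zero hk, prime_two.factorization]
  simp only [Finsupp.inf_apply, Finsupp.add_apply, Finsupp.single_apply]
  split_ifs with hq
  · subst hq
    simp only [factorization_def _ prime_two]
    omega
  · simp

lemma odd_div_gcd_of_padicValNat_lt {k m : ℕ} (hk : k ≠ 0) (hm : m ≠ 0)
    (h : padicValNat 2 k < padicValNat 2 m) : Odd (k / gcd k m) := by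
  have hv : padicValNat 2 (k / gcd k m) = 0 := by
    rw [padicValNat.div_of_dvd (gcd_dvd_left k m), padicValNat_gcd hk hm]
    omega
  have hkg : k / gcd k m ≠ 0 :=
    (div_ne_zero_iff_of_dvd (gcd_dvd_left k m)).mpr ⟨hk, gcd_ne_zero_right hm⟩
  rw [← not_even_iff_odd, even_iff_two_dvd]
  exact ((padicValNat.eq_zero_iff.mp hv).resolve_left (by norm_num)).resolve_left hkg

end Nat

theorem stmt_0 (p m k : ℕ) (hp : p.Prime) (hm : 0 < m) (hk : 0 < k) :
    Nat.gcd (p ^ k + 1) (p ^ m - 1) =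
      if p = 2 then (2 ^ Nat.gcd (2 * k) m - 1) / (2 ^ Nat.gcd k m - 1)
      else if padicValNat 2 m ≤ padicValNat 2 k then 2
      else p ^ Nat.gcd k m + 1 := by
  have hg : Nat.gcd k m ≠ 0 := Nat.gcd_ne_zero_left hk.ne'
  have hpg : 0 < p ^ Nat.gcd k m := pow_pos hp.pos _
  have h2g : 0 < 2 ^ Nat.gcd k m - 1 := by simpa using Nat.one_lt_two_pow_iff.mpr hg
  have hpk : p ^ k = (p ^ Nat.gcd k m) ^ (k / Nat.gcd k m) := by
    rw [← pow_mul, Nat.mul_div_cancel' (Nat.gcd_dvd_left k m)]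
  rw [Nat.pow_add_one_gcd_pow_sub_one]
  by_cases hv : padicValNat 2 m ≤ padicValNat 2 k
  · rw [Nat.gcd_two_mul_left_of_padicValNat_le hk.ne' hm.ne' hv, hpk,
      Nat.pow_add_one_gcd_sub_one hpg]
    split_ifs with hp2
    · subst hp2
      rw [Nat.div_self h2g]
      exact Nat.coprime_two_left.mpr (Nat.Even.sub_odd hpg (even_two.pow_of_ne_zero hg) odd_one)
    · exact Nat.gcd_eq_left (Nat.Odd.sub_odd (hp.odd_of_ne_two hp2).pow odd_one).two_dvd
  · rw [if_neg hv]
    rw [not_le] at hv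
    rw [Nat.gcd_two_mul_left_of_padicValNat_lt hk.ne' hm.ne' hv, pow_mul', hpk,
      Nat.pow_add_one_gcd_sq_sub_one (Nat.odd_div_gcd_of_padicValNat_lt hk.ne' hm.ne' hv)]
    split_ifs with hp2
    · subst hp2
      rw [pow_mul', Nat.sq_sub_one, Nat.mul_div_cancel _ h2g]
    · rfl
end

section
/- Let F(x) = x^{2^k+1} be the Gold function over GF(2^m) with 1 ≤ k < m. Then F is PcN with respect to c ∈ GF(2^m) with c ≠ 1 and c ≠ 0 if and only if v_2(m) ≤ v_2(k) and c ∈ GF(2^{gcd(k,m)}). -/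
/-!
Write `q = 2 ^ k` and `D_a(x) = (x + a) ^ (q + 1) + c x ^ (q + 1)`. Taking `a = 0` shows that PcN
forces `x ↦ x ^ (q + 1)` to be injective. If `c ^ q = c` then also `(1 + c) ^ q = 1 + c`, and
completing the power gives `D_a(x) = (1 + c) (x + a / (1 + c)) ^ (q + 1) + const`, so PcN is then
equivalent to that injectivity. If `c ^ q ≠ c`, then `D_{1+c}(1 + y) = D_{1+c}(1)` for the nonzero
`y` with `(1 + c) y ^ q = c ^ q + c`. Injectivity of `x ↦ x ^ (q + 1)` on `GF(2^m)` means
`gcd(2 ^ m - 1, 2 ^ k + 1) = 1`, which holds iff `v₂(m) ≤ v₂(k)`. Finally `c ^ q = c` and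
`c ^ (2 ^ m) = c` give `c ^ (2 ^ gcd(k, m)) = c`, as the periodic points of Frobenius.
-/

open Function

lemma padicValNat_le_of_dvd {p a b : ℕ} [Fact p.Prime] (hb : b ≠ 0) (h : a ∣ b) :
    padicValNat p a ≤ padicValNat p b :=
  (padicValNat_dvd_iff_le hb).1 (pow_padicValNat_dvd.trans h)

namespace Nat

lemma dvd_of_dvd_two_mul_of_padicValNat_le {r k : ℕ} (hk : k ≠ 0) (h : r ∣ 2 * k)
    (hv : padicValNat 2 r ≤ padicValNat 2 k) : r ∣ k := by
  obtain ⟨s, hs⟩ := h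
  have hr : r ≠ 0 := by rintro rfl; omega
  have hs0 : s ≠ 0 := by rintro rfl; omega
  have hval : padicValNat 2 k + 1 = padicValNat 2 r + padicValNat 2 s := by
    rw [← padicValNat.mul hr hs0, ← hs, padicValNat.mul two_ne_zero hk, padicValNat_self,
      add_comm]
  obtain ⟨t, rfl⟩ := dvd_of_one_le_padicValNat (p := 2) (n := s) (by omega)
  exact ⟨t, by linarith⟩

lemma pow_add_one_dvd_pow_two_mul_sub_one (x n : ℕ) : x ^ n + 1 ∣ x ^ (2 * n) - 1 := by
  rw [mul_comm, pow_mul, ← one_pow 2, Nat.sq_sub_sq]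
  exact dvd_mul_right _ _

lemma coprime_two_pow_sub_one_two_pow_add_one_of_padicValNat_le {m k : ℕ} (hm : m ≠ 0)
    (hk : k ≠ 0) (h : padicValNat 2 m ≤ padicValNat 2 k) :
    Coprime (2 ^ m - 1) (2 ^ k + 1) := by
  set g := gcd (2 ^ m - 1) (2 ^ k + 1)
  have hgm : g ∣ 2 ^ m - 1 := gcd_dvd_left _ _
  -- `g` divides `2 ^ (2k) - 1`, and `gcd m (2k)` divides `k` by the valuation hypothesis.
  have hg_gcd : g ∣ 2 ^ gcd m (2 * k) - 1 := by
    rw [← pow_sub_one_gcd_pow_sub_one]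
    exact dvd_gcd hgm ((gcd_dvd_right _ _).trans (pow_add_one_dvd_pow_two_mul_sub_one 2 k))
  have hgcd_k : gcd m (2 * k) ∣ k := dvd_of_dvd_two_mul_of_padicValNat_le hk (gcd_dvd_right _ _)
    ((padicValNat_le_of_dvd hm (gcd_dvd_left _ _)).trans h)
  have hg_sub : g ∣ 2 ^ k - 1 := hg_gcd.trans (pow_sub_one_dvd_pow_sub_one 2 hgcd_k)
  have hg_two : g ∣ 2 := by
    have := Nat.dvd_sub (gcd_dvd_right _ _) hg_sub
    have hk_pos : 1 ≤ 2 ^ k := Nat.one_le_two_pow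
    rwa [show 2 ^ k + 1 - (2 ^ k - 1) = 2 by omega] at this
  have hg_odd : Odd g := Odd.of_dvd_nat (Nat.Even.sub_odd Nat.one_le_two_pow
    (even_pow.2 ⟨even_two, hm⟩) odd_one) hgm
  exact (coprime_two_right.2 hg_odd).eq_one_of_dvd hg_two

lemma not_coprime_two_pow_sub_one_two_pow_add_one_of_padicValNat_lt {m k : ℕ} (hk : k ≠ 0)
    (h : padicValNat 2 k < padicValNat 2 m) :
    ¬ Coprime (2 ^ m - 1) (2 ^ k + 1) := by
  have hm : m ≠ 0 := by rintro rfl; simp at h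
  -- With `d = 2 ^ v₂(k)`, `2 ^ d + 1` is a common divisor: `k / d` is odd and `2d ∣ m`.
  obtain ⟨e, j, hj, rfl⟩ := exists_eq_two_pow_mul_odd hk
  have hv : padicValNat 2 (2 ^ e * j) = e := by
    rw [padicValNat.mul (by positivity) hj.pos.ne', padicValNat.prime_pow,
      padicValNat.eq_zero_of_not_dvd hj.not_two_dvd_nat, add_zero]
  have hdvd_m : 2 * 2 ^ e ∣ m := by
    rw [← pow_succ']
    exact (padicValNat_dvd_iff_le hm).2 (by omega)
  have hdvd_left : 2 ^ 2 ^ e + 1 ∣ 2 ^ m - 1 :=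
    (pow_add_one_dvd_pow_two_mul_sub_one 2 _).trans (pow_sub_one_dvd_pow_sub_one 2 hdvd_m)
  have hdvd_right : 2 ^ 2 ^ e + 1 ∣ 2 ^ (2 ^ e * j) + 1 := by
    simpa [pow_mul] using hj.nat_add_dvd_pow_add_pow (2 ^ 2 ^ e) 1
  intro hcop
  have := Nat.eq_one_of_dvd_coprimes hcop hdvd_left hdvd_right
  have : 0 < 2 ^ 2 ^ e := by positivity
  omega

lemma coprime_two_pow_sub_one_two_pow_add_one_iff {m k : ℕ} (hm : m ≠ 0) (hk : k ≠ 0) :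
    Coprime (2 ^ m - 1) (2 ^ k + 1) ↔ padicValNat 2 m ≤ padicValNat 2 k :=
  ⟨fun hcop => not_lt.1 fun h =>
      not_coprime_two_pow_sub_one_two_pow_add_one_of_padicValNat_lt hk h hcop,
    coprime_two_pow_sub_one_two_pow_add_one_of_padicValNat_le hm hk⟩

end Nat

lemma injective_pow_iff_injective_units_pow {K : Type*} [GroupWithZero K] {N : ℕ} (hN : N ≠ 0) :
    Injective (fun x : K => x ^ N) ↔ Injective (fun u : Kˣ => u ^ N) := by
  refine ⟨fun h u v huv => Units.ext (h (by simpa using congrArg Units.val huv)),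
    fun h x y hxy => ?_⟩
  simp only at hxy
  rcases eq_or_ne x 0 with rfl | hx
  · exact (pow_eq_zero_iff hN).1 (hxy.symm.trans (zero_pow hN)) |>.symm
  rcases eq_or_ne y 0 with rfl | hy
  · exact (pow_eq_zero_iff hN).1 (hxy.trans (zero_pow hN))
  simpa using congrArg Units.val
    (h (a₁ := Units.mk0 x hx) (a₂ := Units.mk0 y hy) (Units.ext (by simpa using hxy)))

lemma FiniteField.injective_pow_iff_coprime {K : Type*} [Field K] [Fintype K] {N : ℕ}
    (hN : N ≠ 0) : Injective (fun x : K => x ^ N) ↔ Nat.Coprime (Fintype.card K - 1) N := by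
  rw [injective_pow_iff_injective_units_pow hN, Nat.Coprime, ← Nat.card_eq_fintype_card,
    ← Nat.card_units, ← IsCyclic.card_powMonoidHom_ker, Subgroup.card_eq_one,
    MonoidHom.ker_eq_bot_iff]
  rfl

lemma isPeriodicPt_pow_iff {M : Type*} [Monoid M] {p n : ℕ} {c : M} :
    IsPeriodicPt (· ^ p) n c ↔ c ^ p ^ n = c := by
  simp only [IsPeriodicPt, IsFixedPt, pow_iterate]

lemma pow_pow_gcd_eq_self_iff {M : Type*} [Monoid M] {p m k : ℕ} {c : M} (hm : c ^ p ^ m = c) :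
    c ^ p ^ Nat.gcd k m = c ↔ c ^ p ^ k = c := by
  simp only [← isPeriodicPt_pow_iff]
  exact ⟨fun h => h.trans_dvd (Nat.gcd_dvd_left k m),
    fun h => h.gcd (isPeriodicPt_pow_iff.2 hm)⟩

section Gold

variable {K : Type*} [Field K] [CharP K 2] {c : K}

-- `gold_cdiff` names the map `x ↦ (x + a) ^ (2 ^ k + 1) + c * x ^ (2 ^ k + 1)`.

lemma gold_cdiff_eq_of_pow_two_pow_eq_self {k : ℕ} (hc : c ^ 2 ^ k = c)
    (hu : 1 + c ≠ 0) (a x : K) :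
    (x + a) ^ (2 ^ k + 1) + c * x ^ (2 ^ k + 1) =
      (1 + c) * (x + a / (1 + c)) ^ (2 ^ k + 1) + c * a ^ (2 ^ k + 1) / (1 + c) := by
  have hu_fix : (1 + c) ^ 2 ^ k = 1 + c := by rw [add_pow_char_pow, one_pow, hc]
  rw [pow_succ (x + a), pow_succ (x + a / (1 + c)), add_pow_char_pow, add_pow_char_pow, div_pow,
    hu_fix]
  field_simp
  ring

lemma gold_cdiff_collision (k : ℕ) {y : K} (hy : (1 + c) * y ^ 2 ^ k = c ^ 2 ^ k + c) :
    (1 + y + (1 + c)) ^ (2 ^ k + 1) + c * (1 + y) ^ (2 ^ k + 1) =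
      (1 + (1 + c)) ^ (2 ^ k + 1) + c * 1 ^ (2 ^ k + 1) := by
  have h2 : (2 : K) = 0 := CharTwo.two_eq_zero
  rw [show 1 + y + (1 + c) = y + c by linear_combination h2,
    show 1 + (1 + c) = c by linear_combination h2, pow_succ (y + c), pow_succ (1 + y),
    add_pow_char_pow, add_pow_char_pow, one_pow]
  linear_combination y * hy + (y * c + y * c ^ 2 ^ k + y ^ 2 ^ k * c) * h2

variable [Finite K]

lemma pow_two_pow_eq_self_of_injective_gold_cdiff (k : ℕ) (hc : c ≠ 1)
    (h : Injective fun x : K => (x + (1 + c)) ^ (2 ^ k + 1) + c * x ^ (2 ^ k + 1)) :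
    c ^ 2 ^ k = c := by
  by_contra hck
  have hu : 1 + c ≠ 0 := fun h0 => hc (CharTwo.add_eq_zero.1 h0).symm
  obtain ⟨y, hy⟩ := (bijective_iterateFrobenius K 2 k).2 ((c ^ 2 ^ k + c) / (1 + c))
  rw [iterateFrobenius_def] at hy
  have hy0 : y ≠ 0 := by
    rintro rfl
    rw [zero_pow (by positivity), eq_comm, div_eq_zero_iff, CharTwo.add_eq_zero] at hy
    exact hy.elim hck hu
  have hcollide := gold_cdiff_collision k (c := c) (y := y) (by rw [hy]; field_simp)
  exact hy0 (add_eq_left.1 (h hcollide))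

lemma bijective_gold_cdiff_of_pow_two_pow_eq_self {k : ℕ} (hc : c ≠ 1) (hck : c ^ 2 ^ k = c)
    (hinj : Injective fun x : K => x ^ (2 ^ k + 1)) (a : K) :
    Bijective fun x => (x + a) ^ (2 ^ k + 1) + c * x ^ (2 ^ k + 1) := by
  have hu : 1 + c ≠ 0 := fun h0 => hc (CharTwo.add_eq_zero.1 h0).symm
  convert (Equiv.addRight (c * a ^ (2 ^ k + 1) / (1 + c))).bijective.comp
    ((Equiv.mulLeft₀ (1 + c) hu).bijective.comp
      ((Finite.injective_iff_bijective.1 hinj).comp (Equiv.addRight (a / (1 + c))).bijective))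
    using 1
  funext x
  simp [gold_cdiff_eq_of_pow_two_pow_eq_self hck hu]

lemma bijective_gold_cdiff_iff (k : ℕ) (hc : c ≠ 1) :
    (∀ a : K, Bijective fun x => (x + a) ^ (2 ^ k + 1) + c * x ^ (2 ^ k + 1)) ↔
      Injective (fun x : K => x ^ (2 ^ k + 1)) ∧ c ^ 2 ^ k = c := by
  refine ⟨fun h => ⟨fun x y hxy => (h 0).1 ?_,
      pow_two_pow_eq_self_of_injective_gold_cdiff k hc (h _).1⟩,
    fun ⟨hinj, hck⟩ => bijective_gold_cdiff_of_pow_two_pow_eq_self hc hck hinj⟩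
  simp only [add_zero, hxy]

end Gold

theorem stmt_4_general (m k : ℕ) (hk : 1 ≤ k)
    (F : Type*) [Field F] [Fintype F] (hcard : Fintype.card F = 2 ^ m)
    (c : F) (hc1 : c ≠ 1) :
    (∀ a b : F, ∃! x : F, (x + a) ^ (2 ^ k + 1) + c * x ^ (2 ^ k + 1) = b) ↔
      (padicValNat 2 m ≤ padicValNat 2 k ∧ c ^ (2 ^ Nat.gcd k m) = c) := by
  have hm : m ≠ 0 := by
    rintro rfl
    exact (Fintype.one_lt_card (α := F)).ne' hcard
  have : CharP F 2 := charP_of_card_eq_prime_pow hcard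
  have hcm : c ^ 2 ^ m = c := hcard ▸ FiniteField.pow_card c
  simp only [← bijective_iff_existsUnique]
  rw [bijective_gold_cdiff_iff k hc1, FiniteField.injective_pow_iff_coprime (by positivity), hcard,
    Nat.coprime_two_pow_sub_one_two_pow_add_one_iff hm (by omega), pow_pow_gcd_eq_self_iff hcm]

theorem stmt_4 (m k : ℕ) (hk : 1 ≤ k) (hkm : k < m)
    (F : Type*) [Field F] [Fintype F] (hcard : Fintype.card F = 2 ^ m)
    (c : F) (hc1 : c ≠ 1) (hc0 : c ≠ 0) :
    (∀ a b : F, ∃! x : F, (x + a) ^ (2 ^ k + 1) + c * x ^ (2 ^ k + 1) = b) ↔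
      (padicValNat 2 m ≤ padicValNat 2 k ∧ c ^ (2 ^ Nat.gcd k m) = c) :=
  stmt_4_general m k hk F hcard c hc1
end

section
/- Let p be an odd prime with p^m ≡ 3 (mod 4) and p^k ≡ 3 (mod 4). Then gcd((p^k - 1)(p^m - 1), p^m + 1) = 4. -/
/-!
Since `p^k ≡ 3 (mod 4)` is not a square mod 4, `k` is odd. A common divisor `d` of `p^k - 1` and
`p^m + 1` sees `1 = (p^k)^m = (p^m)^k = (-1)^k = -1`, so `d ∣ 2`; the case `k = m = 1` of the same
argument, applied to `p^m`, bounds `gcd(p^m - 1, p^m + 1)`. Hence the gcd divides `2 · 2`, and `4`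
divides both `(p^k - 1)(p^m - 1)` (a product of two even numbers) and `p^m + 1`.
-/

theorem Nat.odd_of_pow_mod_four_eq_three {n k : ℕ} (h : n ^ k % 4 = 3) : Odd k := by
  by_contra hk
  obtain ⟨j, rfl⟩ := Nat.not_odd_iff_even.mp hk
  have hsq : ((n ^ j : ℕ) : ZMod 4) ^ 2 = 3 := by
    rw [← Nat.cast_pow, ← pow_mul, mul_two, ← ZMod.natCast_mod, h]
    rfl
  have hsquares : ∀ x : ZMod 4, x ^ 2 ≠ 3 := by decide
  exact hsquares _ hsq

theorem two_eq_zero_of_pow_eq_one_of_pow_eq_neg_one {R : Type*} [CommRing R] {x : R} {k m : ℕ}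
    (hk : Odd k) (h₁ : x ^ k = 1) (h₂ : x ^ m = -1) : (2 : R) = 0 := by
  have hneg : (-1 : R) = 1 :=
    calc (-1 : R) = (x ^ m) ^ k := by rw [h₂, hk.neg_one_pow]
      _ = (x ^ k) ^ m := by rw [← pow_mul, ← pow_mul, mul_comm]
      _ = 1 := by rw [h₁, one_pow]
  linear_combination -hneg

theorem Nat.gcd_pow_sub_one_pow_add_one_dvd_two {a k m : ℕ} (hk : Odd k) :
    Nat.gcd (a ^ k - 1) (a ^ m + 1) ∣ 2 := by
  rcases Nat.eq_zero_or_pos a with rfl | ha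
  · simp only [zero_pow hk.pos.ne', zero_tsub, zero_pow_eq, Nat.gcd_zero_left]
    split_ifs <;> norm_num
  set d := Nat.gcd (a ^ k - 1) (a ^ m + 1)
  have h₁ : (a : ZMod d) ^ k = 1 := by
    have := (ZMod.natCast_eq_zero_iff _ d).mpr (Nat.gcd_dvd_left (a ^ k - 1) (a ^ m + 1))
    rwa [Nat.cast_sub (Nat.one_le_pow _ _ ha), Nat.cast_pow, Nat.cast_one, sub_eq_zero] at this
  have h₂ : (a : ZMod d) ^ m = -1 := by
    have := (ZMod.natCast_eq_zero_iff _ d).mpr (Nat.gcd_dvd_right (a ^ k - 1) (a ^ m + 1))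
    rwa [Nat.cast_add, Nat.cast_pow, Nat.cast_one, add_eq_zero_iff_eq_neg] at this
  have := two_eq_zero_of_pow_eq_one_of_pow_eq_neg_one hk h₁ h₂
  exact (ZMod.natCast_eq_zero_iff 2 d).mp (by exact_mod_cast this)

theorem stmt_7_general (p m k : ℕ)
    (h3m : p ^ m % 4 = 3) (h3k : p ^ k % 4 = 3) :
    Nat.gcd ((p ^ k - 1) * (p ^ m - 1)) (p ^ m + 1) = 4 := by
  have hkm : Nat.gcd (p ^ k - 1) (p ^ m + 1) ∣ 2 :=
    Nat.gcd_pow_sub_one_pow_add_one_dvd_two (Nat.odd_of_pow_mod_four_eq_three h3k)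
  have hmm : Nat.gcd ((p ^ m) ^ 1 - 1) ((p ^ m) ^ 1 + 1) ∣ 2 :=
    Nat.gcd_pow_sub_one_pow_add_one_dvd_two odd_one
  rw [pow_one] at hmm
  apply Nat.dvd_antisymm
  · rw [Nat.gcd_comm] at hkm hmm ⊢
    exact (Nat.gcd_mul_right_dvd_mul_gcd _ _ _).trans (Nat.mul_dvd_mul hkm hmm : _ ∣ 2 * 2)
  · refine Nat.dvd_gcd (show 2 * 2 ∣ _ from ?_) (by omega)
    exact Nat.mul_dvd_mul (a := 2) (c := 2) (by omega) (by omega)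

theorem stmt_7 (p m k : ℕ) (hp : p.Prime) (hodd : Odd p) (hm : 0 < m) (hk : 0 < k)
    (h3m : p ^ m % 4 = 3) (h3k : p ^ k % 4 = 3) :
    Nat.gcd ((p ^ k - 1) * (p ^ m - 1)) (p ^ m + 1) = 4 :=
  stmt_7_general p m k h3m h3k
end

section
/- Let p be an odd prime with p^m ≡ 3 (mod 4), and let k, d be positive integers such that d(p^k+1) ≡ 2 (mod p^m - 1) and d is odd. Then F(x) = x^d is PcN over GF(p^m) with c = -1, i.e., for all a, b ∈ GF(p^m), the equation (x+a)^d + x^d = b has exactly one solution x in GF(p^m). -/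
/-!
Put `σ z = z ^ p ^ k`. The congruence on `d` says `z ^ d * σ (z ^ d) = z ^ 2`, so `z ↦ z ^ d` is
injective, and the substitution `x = a (y - 1) / 2` reduces the claim to injectivity of
`f y = (y + 1) ^ d + (y - 1) ^ d`. As `-1` is a non-square, every `y ≠ ±1` can be written as
`y + 1 = ε W σ(W) (y - 1)` with `ε = ±1` and `((y + 1) / (y - 1)) ^ d = ε W ^ 2`; then `s = f y`
puts `(W, σ W)` on the conic `g (ε W σ W - 1) ^ 2 = (1 + ε W ^ 2) (1 + ε σ(W) ^ 2)`,
`g = s σ(s) / 4`. With `ρ ^ 2 = ε (g - 1)` the conic equation factors, and after possibly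
replacing `W` by `-W` it reads `σ W = (ρ - W) / (1 + ε ρ W)`, the subtraction law of `tan`
(`ε = 1`) or `tanh` (`ε = -1`). For two solutions `W₁, W₂` of this, `V = (W₁ - W₂) / (1 + ε W₁ W₂)`
satisfies `σ V = -V`, which forces `V = 0` because `m` is odd. So `W₁ = W₂`, or else
`y₂ = -y₁`, which is excluded since `f` is odd and `f y ≠ 0`.
-/

namespace FiniteField

variable {F : Type*} [Field F] [Fintype F]

theorem pow_eq_pow_of_modEq_card_sub_one {z : F} (hz : z ≠ 0) {a b : ℕ}
    (h : a ≡ b [MOD Fintype.card F - 1]) : z ^ a = z ^ b := by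
  classical
  have hdvd : orderOf (Units.mk0 z hz) ∣ Fintype.card F - 1 :=
    Fintype.card_units (α := F) ▸ orderOf_dvd_card
  simpa [Units.ext_iff] using (pow_eq_pow_iff_modEq (x := Units.mk0 z hz)).mpr (h.of_dvd hdvd)

theorem isSquare_or_isSquare_neg (hF : ¬IsSquare (-1 : F)) (z : F) :
    IsSquare z ∨ IsSquare (-z) := by
  classical
  by_cases hz : z = 0
  · simp [hz]
  refine or_iff_not_imp_left.mpr fun hnz => ?_
  rw [← quadraticChar_one_iff_isSquare (neg_ne_zero.mpr hz), neg_eq_neg_one_mul, map_mul,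
    quadraticChar_neg_one_iff_not_isSquare.mpr hF, quadraticChar_neg_one_iff_not_isSquare.mpr hnz]
  norm_num

theorem eq_zero_of_iterateFrobenius_eq_neg {p m : ℕ} [Fact p.Prime] [CharP F p]
    (hcard : Fintype.card F = p ^ m) (hm : Odd m) (h2 : (2 : F) ≠ 0) {k : ℕ} {z : F}
    (hz : iterateFrobenius F p k z = -z) : z = 0 := by
  have hk : (frobenius F p)^[k] z = -z := by rw [← coe_iterateFrobenius, hz]
  have h2k : Function.IsPeriodicPt (frobenius F p) (2 * k) z := by
    rw [Function.IsPeriodicPt, Function.IsFixedPt, two_mul, Function.iterate_add_apply, hk,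
      ← coe_iterateFrobenius, map_neg, hz, neg_neg]
  have hm' : Function.IsPeriodicPt (frobenius F p) m z := by
    rw [Function.IsPeriodicPt, Function.IsFixedPt, iterate_frobenius, ← hcard, pow_card]
  have hgcd : Nat.gcd (2 * k) m = Nat.gcd k m :=
    Nat.Coprime.gcd_mul_left_cancel k (Nat.coprime_two_left.mpr hm)
  obtain ⟨j, hj⟩ := Nat.gcd_dvd_left k m
  have hfix : (frobenius F p)^[k] z = z := hj ▸ ((hgcd ▸ h2k.gcd hm').mul_const j).eq
  have : (2 : F) * z = 0 := by linear_combination hfix.symm.trans hk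
  exact (mul_eq_zero.mp this).resolve_left h2

end FiniteField

theorem Nat.odd_of_pow_mod_four_eq_three_s9 {p m : ℕ} (h : p ^ m % 4 = 3) : Odd m := by
  refine Nat.not_even_iff_odd.mp fun ⟨t, ht⟩ => ?_
  have hsq : ∀ x : ZMod 4, x ^ 2 ≠ 3 := by decide
  apply hsq (p ^ t)
  have h' := (ZMod.natCast_eq_natCast_iff' (p ^ m) 3 4).mpr h
  rwa [ht, ← two_mul, pow_mul', Nat.cast_pow, Nat.cast_pow, Nat.cast_ofNat] at h'

section SemilinearPowerMap

variable {F : Type*} [Field F] {σ : F →+* F} {d : ℕ}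

theorem sq_ne_neg_sq (hneg : ¬IsSquare (-1 : F)) {a b : F} (hb : b ≠ 0) : a ^ 2 ≠ -b ^ 2 :=
  fun h => hneg ⟨a / b, by field_simp; linear_combination -h⟩

theorem two_ne_zero_of_not_isSquare_neg_one (hneg : ¬IsSquare (-1 : F)) : (2 : F) ≠ 0 :=
  fun h => hneg ⟨1, by linear_combination -h⟩

theorem four_ne_zero_of_not_isSquare_neg_one (hneg : ¬IsSquare (-1 : F)) : (4 : F) ≠ 0 := by
  have h2 := two_ne_zero_of_not_isSquare_neg_one hneg
  rw [show (4 : F) = 2 * 2 by norm_num]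
  exact mul_ne_zero h2 h2

theorem pow_injective_of_pow_mul_map_pow (h2 : (2 : F) ≠ 0) (hd : Odd d)
    (hdσ : ∀ z : F, z ^ d * σ (z ^ d) = z ^ 2) : Function.Injective fun z : F => z ^ d := by
  intro x y hxy
  simp only at hxy
  have hsq : x ^ 2 = y ^ 2 := by rw [← hdσ, ← hdσ, hxy]
  rcases sq_eq_sq_iff_eq_or_eq_neg.mp hsq with h | rfl
  · exact h
  · have : (2 : F) * y ^ d = 0 := by simp only [hd.neg_pow] at hxy; linear_combination -hxy
    rw [(pow_eq_zero_iff hd.pos.ne').mp ((mul_eq_zero.mp this).resolve_left h2), neg_zero]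

theorem map_eq_self_of_eq_one_or_eq_neg_one {ε : F} (hε : ε = 1 ∨ ε = -1) : σ ε = ε := by
  rcases hε with rfl | rfl <;> simp

theorem exists_sign_of_ne_zero (hsq : ∀ z : F, IsSquare z ∨ IsSquare (-z))
    (hneg : ¬IsSquare (-1 : F)) (hσsq : ∀ z, IsSquare (z * σ z)) (hd : Odd d)
    (hdσ : ∀ z : F, z ^ d * σ (z ^ d) = z ^ 2) {r : F} (hr : r ≠ 0) :
    ∃ ε W, (ε = 1 ∨ ε = -1) ∧ W ≠ 0 ∧ r ^ d = ε * W ^ 2 ∧ r = ε * (W * σ W) := by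
  obtain ⟨ε, W, hε, hrW⟩ : ∃ ε W, (ε = 1 ∨ ε = -1) ∧ r ^ d = ε * W ^ 2 := by
    rcases hsq (r ^ d) with ⟨W, hW⟩ | ⟨W, hW⟩
    · exact ⟨1, W, Or.inl rfl, by rw [hW]; ring⟩
    · exact ⟨-1, W, Or.inr rfl, by linear_combination -hW⟩
  have hW : W ≠ 0 := by rintro rfl; simp [hr] at hrW
  refine ⟨ε, W, hε, hW, hrW, ?_⟩
  have hsq_r : r ^ 2 = (W * σ W) ^ 2 := by
    rw [← hdσ, hrW, map_mul, map_pow, map_eq_self_of_eq_one_or_eq_neg_one hε]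
    rcases hε with rfl | rfl <;> ring
  obtain ⟨t, ht⟩ := hσsq W
  have ht0 : t ≠ 0 := by rintro rfl; simp [hW] at ht
  rcases sq_eq_sq_iff_eq_or_eq_neg.mp hsq_r with h | h <;> rcases hε with rfl | rfl
  · rw [h, one_mul]
  · exfalso
    refine sq_ne_neg_sq hneg (pow_ne_zero d ht0) (a := W) ?_
    rw [h, ht, ← sq, ← pow_mul, mul_comm 2 d, pow_mul] at hrW
    linear_combination hrW
  · exfalso
    refine sq_ne_neg_sq hneg (pow_ne_zero d ht0) (a := W) ?_
    rw [h, ht, ← sq, hd.neg_pow, ← pow_mul, mul_comm 2 d, pow_mul] at hrW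
    linear_combination -hrW
  · rw [h, neg_one_mul]

theorem sum_pow_mul_map_sum_pow_of_ratio (hdσ : ∀ z : F, z ^ d * σ (z ^ d) = z ^ 2) {y r : F}
    (hr : y + 1 = r * (y - 1)) :
    ((y + 1) ^ d + (y - 1) ^ d) * σ ((y + 1) ^ d + (y - 1) ^ d) * (r - 1) ^ 2
      = 4 * (1 + r ^ d) * (1 + σ (r ^ d)) := by
  have hv := hdσ (y - 1)
  have hsum : (y + 1) ^ d + (y - 1) ^ d = (1 + r ^ d) * (y - 1) ^ d := by rw [hr, mul_pow]; ring
  have h2 : (y - 1) * (r - 1) = 2 := by linear_combination -hr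
  rw [hsum, map_mul, map_add, map_one]
  linear_combination (1 + r ^ d) * (1 + σ (r ^ d)) * (r - 1) ^ 2 * hv
    + (1 + r ^ d) * (1 + σ (r ^ d)) * ((y - 1) * (r - 1) + 2) * h2

section Conic

variable {ε g W X ρ : F}

theorem isSquare_sign_mul_sub_one (hε : ε = 1 ∨ ε = -1)
    (h : g * (ε * (W * X) - 1) ^ 2 = (1 + ε * W ^ 2) * (1 + ε * X ^ 2))
    (hW : 1 + ε * W ^ 2 ≠ 0) : IsSquare (ε * (g - 1)) := by
  refine ⟨((ε - (g - 1) * W ^ 2) * X + ε * g * W) / (1 + ε * W ^ 2), ?_⟩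
  rw [div_mul_div_comm, eq_div_iff (mul_ne_zero hW hW)]
  rcases hε with rfl | rfl
  · linear_combination (1 - (g - 1) * W ^ 2) * h
  · linear_combination (-1 - (g - 1) * W ^ 2) * h

theorem conic_factor (hε : ε = 1 ∨ ε = -1)
    (h : g * (ε * (W * X) - 1) ^ 2 = (1 + ε * W ^ 2) * (1 + ε * X ^ 2))
    (hρ : ρ ^ 2 = ε * (g - 1)) :
    (X * (1 + ε * ρ * W) - (ρ - W)) * (X * (1 - ε * ρ * W) + (ρ + W)) = 0 := by
  rcases hε with rfl | rfl
  · linear_combination (-1) * h - (W * X - 1) ^ 2 * hρ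
  · linear_combination h - (W * X + 1) ^ 2 * hρ

theorem exists_map_mul_eq_sub_of_conic (hε : ε = 1 ∨ ε = -1)
    (h : g * (ε * (W * σ W) - 1) ^ 2 = (1 + ε * W ^ 2) * (1 + ε * σ W ^ 2))
    (hρ : ρ ^ 2 = ε * (g - 1)) :
    ∃ V, V * σ V = W * σ W ∧ σ V * (1 + ε * ρ * V) = ρ - V := by
  rcases mul_eq_zero.mp (conic_factor hε h hρ) with h0 | h0
  · exact ⟨W, rfl, by linear_combination h0⟩
  · exact ⟨-W, by rw [map_neg]; ring, by rw [map_neg]; linear_combination -h0⟩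

end Conic

/-- For `ε = 1` this is the subtraction formula of `tan`, for `ε = -1` that of `tanh`. -/
def tanSub (ε a b : F) : F := (a - b) / (1 + ε * a * b)

theorem map_tanSub (ε a b : F) : σ (tanSub ε a b) = tanSub (σ ε) (σ a) (σ b) := by
  simp only [tanSub, map_div₀, map_sub, map_add, map_mul, map_one]

theorem tanSub_swap (ε a b : F) : tanSub ε b a = -tanSub ε a b := by
  rw [tanSub, tanSub, ← neg_div, neg_sub, mul_right_comm]

theorem tanSub_tanSub {ε ρ a b : F} (ha : 1 + ε * ρ * a ≠ 0)
    (hb : 1 + ε * ρ * b ≠ 0) (hρ : 1 + ε * ρ ^ 2 ≠ 0) :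
    tanSub ε (tanSub ε ρ a) (tanSub ε ρ b) = tanSub ε b a := by
  have hnum : tanSub ε ρ a - tanSub ε ρ b
      = (b - a) * (1 + ε * ρ ^ 2) / ((1 + ε * ρ * a) * (1 + ε * ρ * b)) := by
    rw [tanSub, tanSub, div_sub_div _ _ ha hb]
    ring
  have hden : 1 + ε * tanSub ε ρ a * tanSub ε ρ b
      = (1 + ε * b * a) * (1 + ε * ρ ^ 2) / ((1 + ε * ρ * a) * (1 + ε * ρ * b)) := by
    rw [tanSub, tanSub, eq_div_iff (mul_ne_zero ha hb)]
    field_simp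
    ring
  rw [tanSub, hnum, hden, div_div_div_cancel_right₀ (mul_ne_zero ha hb),
    mul_div_mul_right _ _ hρ, tanSub]

theorem eq_or_one_add_mul_eq_zero (hσ : ∀ z, σ z = -z → z = 0) {ε ρ W₁ W₂ : F}
    (hε : ε = 1 ∨ ε = -1) (hρ : 1 + ε * ρ ^ 2 ≠ 0)
    (h₁ : σ W₁ * (1 + ε * ρ * W₁) = ρ - W₁) (h₂ : σ W₂ * (1 + ε * ρ * W₂) = ρ - W₂) :
    W₁ = W₂ ∨ 1 + ε * W₁ * W₂ = 0 := by
  have hden : ∀ {W}, σ W * (1 + ε * ρ * W) = ρ - W → 1 + ε * ρ * W ≠ 0 := fun h h0 => by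
    rw [h0, mul_zero, eq_comm, sub_eq_zero] at h
    subst h
    exact hρ (by linear_combination h0)
  have hσW : ∀ {W}, σ W * (1 + ε * ρ * W) = ρ - W → σ W = tanSub ε ρ W := fun h =>
    eq_div_of_mul_eq (hden h) h
  have hfix : σ (tanSub ε W₁ W₂) = -tanSub ε W₁ W₂ := by
    rw [map_tanSub, map_eq_self_of_eq_one_or_eq_neg_one hε, hσW h₁, hσW h₂,
      tanSub_tanSub (hden h₁) (hden h₂) hρ, tanSub_swap]
  rcases div_eq_zero_iff.mp (hσ _ hfix) with h | h
  · exact Or.inl (sub_eq_zero.mp h)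
  · exact Or.inr h

theorem sign_eq_of_isSquare (hneg : ¬IsSquare (-1 : F)) {ε₁ ε₂ c : F} (hc : c ≠ 0)
    (hε₁ : ε₁ = 1 ∨ ε₁ = -1) (hε₂ : ε₂ = 1 ∨ ε₂ = -1)
    (h₁ : IsSquare (ε₁ * c)) (h₂ : IsSquare (ε₂ * c)) : ε₁ = ε₂ := by
  obtain ⟨a, ha⟩ := h₁
  obtain ⟨b, hb⟩ := h₂
  have ha0 : a ≠ 0 := by rintro rfl; rcases hε₁ with rfl | rfl <;> simp_all
  have hb0 : b ≠ 0 := by rintro rfl; rcases hε₂ with rfl | rfl <;> simp_all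
  rcases hε₁ with rfl | rfl <;> rcases hε₂ with rfl | rfl
  · rfl
  · exact absurd (by linear_combination -hb - ha) (sq_ne_neg_sq hneg ha0 (a := b))
  · exact absurd (by linear_combination -hb - ha) (sq_ne_neg_sq hneg hb0 (a := a))
  · rfl

theorem eq_or_eq_neg_of_ratio (h2 : (2 : F) ≠ 0) {y₁ y₂ r₁ r₂ : F}
    (h₁ : y₁ + 1 = r₁ * (y₁ - 1)) (h₂ : y₂ + 1 = r₂ * (y₂ - 1)) (hr : r₁ = r₂ ∨ r₁ * r₂ = 1) :
    y₁ = y₂ ∨ y₁ = -y₂ := by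
  rcases hr with rfl | hr
  · have : (2 : F) * (y₁ - y₂) = 0 := by linear_combination (y₁ - 1) * h₂ - (y₂ - 1) * h₁
    exact Or.inl (sub_eq_zero.mp ((mul_eq_zero.mp this).resolve_left h2))
  · have : (2 : F) * (y₁ + y₂) = 0 := by
      linear_combination (y₂ + 1) * h₁ + r₁ * (y₁ - 1) * h₂ + (y₁ - 1) * (y₂ - 1) * hr
    exact Or.inr (eq_neg_of_add_eq_zero_left ((mul_eq_zero.mp this).resolve_left h2))

theorem exists_conic_point (hsq : ∀ z : F, IsSquare z ∨ IsSquare (-z))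
    (hneg : ¬IsSquare (-1 : F)) (hσsq : ∀ z, IsSquare (z * σ z)) (hd : Odd d)
    (hdσ : ∀ z : F, z ^ d * σ (z ^ d) = z ^ 2) {y s : F} (hy₁ : y ≠ 1) (hy₂ : y ≠ -1)
    (hs : (y + 1) ^ d + (y - 1) ^ d = s) :
    ∃ ε W, (ε = 1 ∨ ε = -1) ∧ W ≠ 0 ∧ y + 1 = ε * (W * σ W) * (y - 1) ∧
      s * σ s / 4 * (ε * (W * σ W) - 1) ^ 2 = (1 + ε * W ^ 2) * (1 + ε * σ W ^ 2) := by
  have h4 := four_ne_zero_of_not_isSquare_neg_one hneg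
  have hy₁' : y - 1 ≠ 0 := sub_ne_zero.mpr hy₁
  have hy₂' : y + 1 ≠ 0 := fun h => hy₂ (eq_neg_of_add_eq_zero_left h)
  have hr : y + 1 = (y + 1) / (y - 1) * (y - 1) := (div_mul_cancel₀ _ hy₁').symm
  obtain ⟨ε, W, hε, hW, hrd, hrW⟩ :=
    exists_sign_of_ne_zero hsq hneg hσsq hd hdσ (div_ne_zero hy₂' hy₁')
  have hnorm := sum_pow_mul_map_sum_pow_of_ratio hdσ hr
  rw [hrd, hs, hrW, map_mul, map_pow, map_eq_self_of_eq_one_or_eq_neg_one hε] at hnorm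
  refine ⟨ε, W, hε, hW, hrW ▸ hr, ?_⟩
  rw [div_mul_eq_mul_div, div_eq_iff h4, hnorm]
  ring

theorem sum_pow_mul_map_eq_four_iff (hσ : ∀ z, σ z = -z → z = 0)
    (hsq : ∀ z : F, IsSquare z ∨ IsSquare (-z)) (hneg : ¬IsSquare (-1 : F))
    (hσsq : ∀ z, IsSquare (z * σ z)) (hd : Odd d)
    (hdσ : ∀ z : F, z ^ d * σ (z ^ d) = z ^ 2) {y s : F} (hs : (y + 1) ^ d + (y - 1) ^ d = s) :
    s * σ s = 4 ↔ y = 1 ∨ y = -1 := by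
  refine ⟨fun h4 => ?_, fun hy => ?_⟩
  · by_contra! hy
    obtain ⟨ε, W, hε, hW, -, h⟩ := exists_conic_point hsq hneg hσsq hd hdσ hy.1 hy.2 hs
    rw [h4, div_self (four_ne_zero_of_not_isSquare_neg_one hneg)] at h
    have h0 := conic_factor hε h (ρ := 0) (by simp)
    simp only [mul_zero, zero_mul, add_zero, mul_one, sub_zero, zero_sub, zero_add, sub_neg_eq_add,
      mul_self_eq_zero] at h0
    exact hW (hσ W (eq_neg_of_add_eq_zero_left h0))
  · rcases hy with rfl | rfl <;> norm_num [zero_pow hd.pos.ne'] at hs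
    · rw [← hs, hdσ]; norm_num
    · rw [← hs, hdσ]; norm_num

theorem eq_or_eq_neg_of_ne_one_of_ne_neg_one (hσ : ∀ z, σ z = -z → z = 0)
    (hsq : ∀ z : F, IsSquare z ∨ IsSquare (-z)) (hneg : ¬IsSquare (-1 : F))
    (hσsq : ∀ z, IsSquare (z * σ z)) (hd : Odd d) (hdσ : ∀ z : F, z ^ d * σ (z ^ d) = z ^ 2)
    {y₁ y₂ s : F} (hs : s ≠ 0) (hy₁ : y₁ ≠ 1 ∧ y₁ ≠ -1) (hy₂ : y₂ ≠ 1 ∧ y₂ ≠ -1)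
    (hs₁ : (y₁ + 1) ^ d + (y₁ - 1) ^ d = s) (hs₂ : (y₂ + 1) ^ d + (y₂ - 1) ^ d = s) :
    y₁ = y₂ ∨ y₁ = -y₂ := by
  have h2 := two_ne_zero_of_not_isSquare_neg_one hneg
  have h4 := four_ne_zero_of_not_isSquare_neg_one hneg
  obtain ⟨ε₁, W₁, hε₁, -, hr₁, h₁⟩ := exists_conic_point hsq hneg hσsq hd hdσ hy₁.1 hy₁.2 hs₁
  obtain ⟨ε₂, W₂, hε₂, -, hr₂, h₂⟩ := exists_conic_point hsq hneg hσsq hd hdσ hy₂.1 hy₂.2 hs₂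
  set g := s * σ s / 4
  have hg : g ≠ 0 := div_ne_zero (mul_ne_zero hs ((map_ne_zero σ).mpr hs)) h4
  have hg1 : g - 1 ≠ 0 := by
    rw [sub_ne_zero, ne_eq, div_eq_one_iff_eq h4,
      sum_pow_mul_map_eq_four_iff hσ hsq hneg hσsq hd hdσ hs₁]
    tauto
  have hW : ∀ {ε W y : F}, y + 1 = ε * (W * σ W) * (y - 1) →
      g * (ε * (W * σ W) - 1) ^ 2 = (1 + ε * W ^ 2) * (1 + ε * σ W ^ 2) → 1 + ε * W ^ 2 ≠ 0 := by
    intro ε W y hr h h0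
    rw [h0, zero_mul, mul_eq_zero, or_iff_right hg, sq_eq_zero_iff, sub_eq_zero] at h
    exact h2 (by linear_combination hr + (y - 1) * h)
  have hε := sign_eq_of_isSquare hneg hg1 hε₁ hε₂
    (isSquare_sign_mul_sub_one hε₁ h₁ (hW hr₁ h₁)) (isSquare_sign_mul_sub_one hε₂ h₂ (hW hr₂ h₂))
  subst hε
  obtain ⟨ρ, hρ⟩ := isSquare_sign_mul_sub_one hε₁ h₁ (hW hr₁ h₁)
  have hρ' : ρ ^ 2 = ε₁ * (g - 1) := by rw [sq, hρ]
  have hρg : 1 + ε₁ * ρ ^ 2 ≠ 0 := by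
    rw [hρ', ← mul_assoc]
    rcases hε₁ with rfl | rfl <;> simpa using hg
  obtain ⟨V₁, hV₁, hM₁⟩ := exists_map_mul_eq_sub_of_conic hε₁ h₁ hρ'
  obtain ⟨V₂, hV₂, hM₂⟩ := exists_map_mul_eq_sub_of_conic hε₁ h₂ hρ'
  refine eq_or_eq_neg_of_ratio h2 hr₁ hr₂ ?_
  rw [← hV₁, ← hV₂]
  rcases eq_or_one_add_mul_eq_zero hσ hε₁ hρg hM₁ hM₂ with rfl | h
  · exact Or.inl rfl
  · have hσh : 1 + ε₁ * σ V₁ * σ V₂ = 0 := by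
      simpa only [map_add, map_mul, map_one, map_zero, map_eq_self_of_eq_one_or_eq_neg_one hε₁]
        using congrArg σ h
    right
    linear_combination (ε₁ * σ V₁ * σ V₂) * h - hσh

theorem add_one_pow_add_sub_one_pow_injective (hσ : ∀ z, σ z = -z → z = 0)
    (hsq : ∀ z : F, IsSquare z ∨ IsSquare (-z)) (hneg : ¬IsSquare (-1 : F))
    (hσsq : ∀ z, IsSquare (z * σ z)) (hd : Odd d) (hdσ : ∀ z : F, z ^ d * σ (z ^ d) = z ^ 2) :
    Function.Injective fun y : F => (y + 1) ^ d + (y - 1) ^ d := by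
  have h2 := two_ne_zero_of_not_isSquare_neg_one hneg
  have hodd : ∀ y : F, (-y + 1) ^ d + (-y - 1) ^ d = -((y + 1) ^ d + (y - 1) ^ d) := fun y => by
    rw [show -y + 1 = -(y - 1) by ring, show -y - 1 = -(y + 1) by ring, hd.neg_pow, hd.neg_pow]
    ring
  have hzero : ∀ y : F, (y + 1) ^ d + (y - 1) ^ d = 0 → y = 0 := fun y h => by
    have h' : (y + 1) ^ d = (-(y - 1)) ^ d := by rw [hd.neg_pow]; linear_combination h
    have := pow_injective_of_pow_mul_map_pow h2 hd hdσ h'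
    exact (mul_eq_zero.mp (by linear_combination this : (2 : F) * y = 0)).resolve_left h2
  intro y₁ y₂ h
  simp only at h
  set s := (y₁ + 1) ^ d + (y₁ - 1) ^ d with hs
  by_cases hs0 : s = 0
  · rw [hzero y₁ hs0, hzero y₂ (h ▸ hs0)]
  have hdeg : (y₁ = 1 ∨ y₁ = -1) ↔ (y₂ = 1 ∨ y₂ = -1) := by
    rw [← sum_pow_mul_map_eq_four_iff hσ hsq hneg hσsq hd hdσ hs.symm,
      ← sum_pow_mul_map_eq_four_iff hσ hsq hneg hσsq hd hdσ h.symm]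
  have hpm : y₁ = y₂ ∨ y₁ = -y₂ := by
    by_cases h₁ : y₁ = 1 ∨ y₁ = -1
    · have h₂ := hdeg.mp h₁
      rcases h₁ with rfl | rfl <;> rcases h₂ with rfl | rfl <;> norm_num
    · have h₂ := hdeg.not.mp h₁
      rw [not_or] at h₁ h₂
      exact eq_or_eq_neg_of_ne_one_of_ne_neg_one hσ hsq hneg hσsq hd hdσ hs0 h₁ h₂ hs.symm h.symm
  rcases hpm with h' | rfl
  · exact h'
  · have h' : (-y₂ + 1) ^ d + (-y₂ - 1) ^ d = (y₂ + 1) ^ d + (y₂ - 1) ^ d := h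
    rw [hodd] at h'
    have h0 : (2 : F) * ((y₂ + 1) ^ d + (y₂ - 1) ^ d) = 0 := by linear_combination -h'
    exact absurd (h.trans ((mul_eq_zero.mp h0).resolve_left h2)) hs0

theorem add_pow_add_pow_injective (hσ : ∀ z, σ z = -z → z = 0)
    (hsq : ∀ z : F, IsSquare z ∨ IsSquare (-z)) (hneg : ¬IsSquare (-1 : F))
    (hσsq : ∀ z, IsSquare (z * σ z)) (hd : Odd d) (hdσ : ∀ z : F, z ^ d * σ (z ^ d) = z ^ 2)
    (a : F) : Function.Injective fun x : F => (x + a) ^ d + x ^ d := by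
  have h2 := two_ne_zero_of_not_isSquare_neg_one hneg
  rcases eq_or_ne a 0 with rfl | ha
  · intro x y h
    simp only [add_zero] at h
    exact pow_injective_of_pow_mul_map_pow h2 hd hdσ (mul_left_cancel₀ h2 (by linear_combination h))
  have hcomp : (fun x : F => (x + a) ^ d + x ^ d) = (fun z => (a / 2) ^ d * z) ∘
      (fun y : F => (y + 1) ^ d + (y - 1) ^ d) ∘ (fun x => 2 * x / a + 1) := by
    funext x
    simp only [Function.comp_apply]
    rw [mul_add, ← mul_pow, ← mul_pow]
    congr 2 <;> field_simp <;> ring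
  rw [hcomp]
  refine (mul_right_injective₀ (pow_ne_zero d (div_ne_zero ha h2))).comp
    ((add_one_pow_add_sub_one_pow_injective hσ hsq hneg hσsq hd hdσ).comp fun x y h => ?_)
  simpa [ha, h2] using h

end SemilinearPowerMap

theorem stmt_9_general (p m k d : ℕ) (hp : p.Prime) (hodd : Odd p)
    (h3m : p ^ m % 4 = 3) (hcong : d * (p ^ k + 1) ≡ 2 [MOD p ^ m - 1]) (hd : Odd d)
    (F : Type*) [Field F] [Fintype F] (hcard : Fintype.card F = p ^ m) :
    ∀ a b : F, ∃! x : F, (x + a) ^ d + x ^ d = b := by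
  have := Fact.mk hp
  have := charP_of_card_eq_prime_pow hcard
  have hneg : ¬IsSquare (-1 : F) := by rw [FiniteField.isSquare_neg_one_iff, hcard, h3m]; simp
  have hσ : ∀ z : F, iterateFrobenius F p k z = -z → z = 0 := fun z =>
    FiniteField.eq_zero_of_iterateFrobenius_eq_neg hcard (Nat.odd_of_pow_mod_four_eq_three_s9 h3m)
      (two_ne_zero_of_not_isSquare_neg_one hneg)
  have hσsq : ∀ z : F, IsSquare (z * iterateFrobenius F p k z) := fun z => by
    rw [iterateFrobenius_def, ← pow_succ']
    exact (hodd.pow.add_one).isSquare_pow z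
  have hdσ : ∀ z : F, z ^ d * iterateFrobenius F p k (z ^ d) = z ^ 2 := fun z => by
    rcases eq_or_ne z 0 with rfl | hz
    · simp [hd.pos.ne']
    rw [iterateFrobenius_def, ← pow_mul, ← pow_add, ← mul_one_add, add_comm 1]
    exact FiniteField.pow_eq_pow_of_modEq_card_sub_one hz (hcard ▸ hcong)
  intro a b
  exact (Finite.injective_iff_bijective.mp (add_pow_add_pow_injective hσ
    (FiniteField.isSquare_or_isSquare_neg hneg) hneg hσsq hd hdσ a)).existsUnique b

theorem stmt_9 (p m k d : ℕ) (hp : p.Prime) (hodd : Odd p) (hm : 0 < m) (hk : 0 < k)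
    (h3m : p ^ m % 4 = 3) (hcong : d * (p ^ k + 1) ≡ 2 [MOD p ^ m - 1]) (hd : Odd d)
    (F : Type*) [Field F] [Fintype F] (hcard : Fintype.card F = p ^ m) :
    ∀ a b : F, ∃! x : F, (x + a) ^ d + x ^ d = b :=
  stmt_9_general p m k d hp hodd h3m hcong hd F hcard
end

section
/- Let p be an odd prime with p^m ≡ 1 (mod 4), let m and k be positive integers with v_2(k) = v_2(m), and let d be a positive integer with d·(p^k+1)/2 ≡ (p^m+1)/2 (mod p^m - 1). Then F(x) = x^d is PcN over GF(p^m) with c = -1, i.e., for all a, b ∈ GF(p^m) the equation (x+a)^d + x^d = b has exactly one solution x. -/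
/-!
Put `e = (p^m + p^k)/2`. The congruence on `d` forces `d` odd and `d e ≡ 1 (mod p^m - 1)`, so
`x ↦ x^e` inverts `x ↦ x^d` on `GF(p^m)`. Hence `(x+a)^d + x^d = 0` only for `2x = -a`, and if
`(x+a)^d + x^d = 2t` with `t ≠ 0`, then `v = t - x^d` satisfies `(v+t)^e + (v-t)^e = a`
(`e` is odd). So it suffices that `v ↦ (v+t)^e + (v-t)^e` is injective, and by homogeneity it
suffices to take `t = 2`. In `GF(p^{2m})` every `v ∈ GF(p^m)` is `ζ + ζ⁻¹`, and because
`2e = p^m + p^k` the Frobenius maps give `(v+2)^e + (v-2)^e = 2(ζ^e + ζ^{-e})`. The condition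
`v₂(k) = v₂(m)` makes `e` prime to `p^{2m} - 1`, so `ζ^e` determines `ζ`, up to inversion, and
hence `v`.
-/

open Function

theorem two_mul_gcd_dvd_add_of_padicValNat_eq {m k : ℕ} (hm : m ≠ 0) (hk : k ≠ 0)
    (hv : padicValNat 2 k = padicValNat 2 m) : 2 * Nat.gcd m k ∣ m + k := by
  obtain ⟨a, m₀, hm₀, rfl⟩ := Nat.exists_eq_two_pow_mul_odd hm
  obtain ⟨b, k₀, hk₀, rfl⟩ := Nat.exists_eq_two_pow_mul_odd hk
  have hval : ∀ c n : ℕ, Odd n → padicValNat 2 (2 ^ c * n) = c := fun c n hn => by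
    rw [padicValNat.mul (by positivity) hn.pos.ne', padicValNat.prime_pow,
      padicValNat.eq_zero_of_not_dvd hn.not_two_dvd_nat, add_zero]
  obtain rfl : b = a := by rwa [hval _ _ hm₀, hval _ _ hk₀] at hv
  rw [Nat.gcd_mul_left, ← mul_add, mul_left_comm]
  refine mul_dvd_mul_left _ (Nat.Coprime.mul_dvd_of_dvd_of_dvd ?_ (hm₀.add_odd hk₀).two_dvd
    (Nat.dvd_add (Nat.gcd_dvd_left _ _) (Nat.gcd_dvd_right _ _)))
  exact Nat.Coprime.coprime_dvd_right (Nat.gcd_dvd_left _ _) (Nat.coprime_two_left.mpr hm₀)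

theorem pow_mod_four_eq_of_padicValNat_eq {p m k : ℕ} (hp : Odd p) (hm : m ≠ 0) (hk : k ≠ 0)
    (hv : padicValNat 2 k = padicValNat 2 m) : p ^ k % 4 = p ^ m % 4 := by
  have hsq : p ^ 2 % 4 = 1 := by
    obtain ⟨j, rfl⟩ := hp
    rw [show (2 * j + 1) ^ 2 = 4 * (j * j + j) + 1 by ring]
    omega
  have hpow (n : ℕ) : p ^ n % 4 = p ^ (n % 2) % 4 := by
    conv_lhs => rw [← Nat.div_add_mod n 2, pow_add, pow_mul, Nat.mul_mod, Nat.pow_mod, hsq]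
    simp
  have hpar : k % 2 = m % 2 := by
    have h : 2 ∣ k ↔ 2 ∣ m := by
      rw [dvd_iff_padicValNat_ne_zero hk, dvd_iff_padicValNat_ne_zero hm, hv]
    omega
  rw [hpow k, hpow m, hpar]

theorem Nat.odd_of_mul_modEq_add_one {a c d : ℕ} (hc : Even c)
    (h : d * a ≡ c + 1 [MOD 2 * c]) : Odd d := by
  have hodd : Odd (d * a) := by
    rw [Nat.odd_iff, h.of_mul_right c, ← Nat.odd_iff]
    exact hc.add_one
  exact (Nat.odd_mul.mp hodd).1

theorem Nat.mul_add_modEq_one {a c d : ℕ} (hd : Odd d) (h : d * a ≡ c + 1 [MOD 2 * c]) :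
    d * (c + a) ≡ 1 [MOD 2 * c] := by
  rw [← ZMod.natCast_eq_natCast_iff] at h ⊢
  obtain ⟨j, rfl⟩ := hd
  have hzero : ((2 * c : ℕ) : ZMod (2 * c)) = 0 := ZMod.natCast_self _
  push_cast at h hzero ⊢
  linear_combination h + (j + 1) * hzero

theorem pow_add_pow_ne_zero {R : Type*} [Ring R] (h2 : (2 : R) ≠ 0) {u : R} {m k : ℕ}
    (hm : m ≠ 0) (hk : k ≠ 0) (hv : padicValNat 2 k = padicValNat 2 m)
    (hu : u ^ (2 * m) = 1) : u ^ m + u ^ k ≠ 0 := by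
  intro hsum
  have hmk : u ^ m = -u ^ k := eq_neg_of_add_eq_zero_left hsum
  have h2k : u ^ (2 * k) = 1 := by rw [pow_mul', ← neg_sq, ← hmk, ← pow_mul', hu]
  have hmk1 : u ^ (m + k) = -1 := by rw [pow_add, hmk, neg_mul, ← pow_add, ← two_mul, h2k]
  have hord : orderOf u ∣ m + k := by
    refine dvd_trans ?_ (two_mul_gcd_dvd_add_of_padicValNat_eq hm hk hv)
    rw [← Nat.gcd_mul_left]
    exact Nat.dvd_gcd (orderOf_dvd_of_pow_eq_one hu) (orderOf_dvd_of_pow_eq_one h2k)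
  rw [orderOf_dvd_iff_pow_eq_one, hmk1] at hord
  exact h2 (by rw [← one_add_one_eq_two]; exact neg_eq_iff_add_eq_zero.mp hord)

theorem coprime_sq_sub_one_of_two_mul_eq_pow_add_pow {p m k e : ℕ} (hm : m ≠ 0) (hk : k ≠ 0)
    (hv : padicValNat 2 k = padicValNat 2 m) (he : Odd e) (h2e : 2 * e = p ^ m + p ^ k) :
    Nat.Coprime e ((p ^ m) ^ 2 - 1) := by
  have hp : p ≠ 0 := by
    rintro rfl
    rw [zero_pow hm, zero_pow hk, add_zero] at h2e
    exact he.pos.ne' (by omega)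
  refine Nat.coprime_of_dvd fun l hl hle hlq => ?_
  have := Fact.mk hl
  have h2 : (2 : ZMod l) ≠ 0 := by
    intro h
    have hl2 : l ∣ 2 := by exact_mod_cast (ZMod.natCast_eq_zero_iff 2 l).mp (by exact_mod_cast h)
    rw [(Nat.prime_dvd_prime_iff_eq hl Nat.prime_two).mp hl2] at hle
    exact he.not_two_dvd_nat hle
  refine pow_add_pow_ne_zero h2 hm hk hv (u := (p : ZMod l)) ?_ ?_
  · have h1 : 1 ≡ (p ^ m) ^ 2 [MOD l] :=
      (Nat.modEq_iff_dvd' (Nat.one_le_iff_ne_zero.mpr (by positivity))).mpr hlq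
    have := (ZMod.natCast_eq_natCast_iff _ _ _).mpr h1
    push_cast at this
    rw [pow_mul', ← this]
  · have := (ZMod.natCast_eq_zero_iff _ _).mpr ((hle.mul_left 2).trans h2e.dvd)
    exact_mod_cast this

theorem FiniteField.pow_pow_eq_self_of_mul_modEq_one {F : Type*} [Field F] [Fintype F]
    {d e : ℕ} (hde0 : d * e ≠ 0) (hde : d * e ≡ 1 [MOD Fintype.card F - 1]) (x : F) :
    (x ^ d) ^ e = x := by
  rw [← pow_mul]
  rcases eq_or_ne x 0 with rfl | hx
  · exact zero_pow hde0
  have hord : d * e % orderOf x = 1 % orderOf x :=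
    hde.of_dvd (orderOf_dvd_of_pow_eq_one (FiniteField.pow_card_sub_one_eq_one x hx))
  rw [← pow_mod_orderOf, hord, pow_mod_orderOf, pow_one]

theorem FiniteField.pow_injective_of_coprime {K : Type*} [Field K] [Fintype K] {n : ℕ}
    (hn : n ≠ 0) (hcop : n.Coprime (Fintype.card K - 1)) : Injective fun x : K => x ^ n := by
  intro x y hxy
  simp only at hxy
  by_cases hy : y = 0
  · rw [hy, zero_pow hn, pow_eq_zero_iff hn] at hxy
    rw [hxy, hy]
  have hx : x ≠ 0 := fun hx => hy (pow_eq_zero_iff hn |>.mp (by rw [← hxy, hx, zero_pow hn]))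
  have hpow : (x / y) ^ n.gcd (Fintype.card K - 1) = 1 :=
    pow_gcd_eq_one.mpr ⟨by rw [div_pow, hxy, div_self (pow_ne_zero n hy)],
      FiniteField.pow_card_sub_one_eq_one _ (div_ne_zero hx hy)⟩
  rwa [hcop.gcd_eq_one, pow_one, div_eq_one_iff_eq hy] at hpow

theorem FiniteField.isSquare_algebraMap_of_card_eq_sq {F K : Type*} [Field F] [Fintype F]
    [Field K] [Fintype K] [Algebra F K] (hF : ringChar F ≠ 2)
    (hK : Fintype.card K = Fintype.card F ^ 2) (x : F) : IsSquare (algebraMap F K x) := by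
  rcases eq_or_ne x 0 with rfl | hx
  · rw [map_zero]; exact IsSquare.zero
  obtain ⟨j, hj⟩ := Nat.odd_iff.mpr (FiniteField.odd_card_of_char_ne_two hF)
  have hhalf : Fintype.card K / 2 = (Fintype.card F - 1) * (j + 1) := by
    rw [hK, hj, Nat.add_sub_cancel, show (2 * j + 1) ^ 2 = 2 * (2 * j * (j + 1)) + 1 by ring,
      Nat.mul_add_div two_pos]
    simp
  rw [FiniteField.isSquare_iff (Algebra.ringChar_eq F K ▸ hF) ((map_ne_zero _).mpr hx), hhalf,
    pow_mul, ← map_pow, FiniteField.pow_card_sub_one_eq_one x hx, map_one, one_pow]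

theorem add_inv_eq_add_inv_iff {K : Type*} [Field K] {a b : K} (ha : a ≠ 0) (hb : b ≠ 0) :
    a + a⁻¹ = b + b⁻¹ ↔ a = b ∨ a = b⁻¹ := by
  constructor
  · intro h
    have hfac : (a - b) * (a * b - 1) = 0 := by
      field_simp at h
      linear_combination h
    rcases mul_eq_zero.mp hfac with h1 | h1
    · exact .inl (sub_eq_zero.mp h1)
    · exact .inr (eq_inv_of_mul_eq_one_left (sub_eq_zero.mp h1))
  · rintro (rfl | rfl)
    · rfl
    · rw [inv_inv, add_comm]

theorem exists_add_inv_eq {K : Type*} [Field K] (h2 : (2 : K) ≠ 0) {x : K}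
    (hx : IsSquare (x ^ 2 - 4)) : ∃ ζ : K, ζ ≠ 0 ∧ ζ + ζ⁻¹ = x := by
  obtain ⟨s, hs⟩ := hx
  have hprod : (x + s) / 2 * ((x - s) / 2) = 1 := by
    field_simp
    linear_combination hs
  refine ⟨(x + s) / 2, left_ne_zero_of_mul_eq_one hprod, ?_⟩
  rw [inv_eq_of_mul_eq_one_right hprod]
  field_simp
  ring

theorem add_inv_add_two_pow_add_sub_two_pow {K : Type*} [Field K] {p m k e : ℕ} [ExpChar K p]
    (h2e : 2 * e = p ^ m + p ^ k) {ζ : K} (hζ : ζ ≠ 0) :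
    (ζ + ζ⁻¹ + 2) ^ e + (ζ + ζ⁻¹ - 2) ^ e = 2 * (ζ ^ e + (ζ ^ e)⁻¹) := by
  have hplus : (ζ + ζ⁻¹ + 2) ^ e * ζ ^ e = (ζ ^ p ^ m + 1) * (ζ ^ p ^ k + 1) := by
    rw [← mul_pow, show (ζ + ζ⁻¹ + 2) * ζ = (ζ + 1) ^ 2 by field_simp; ring, ← pow_mul, h2e,
      pow_add, add_pow_expChar_pow, add_pow_expChar_pow, one_pow, one_pow]
  have hminus : (ζ + ζ⁻¹ - 2) ^ e * ζ ^ e = (ζ ^ p ^ m - 1) * (ζ ^ p ^ k - 1) := by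
    rw [← mul_pow, show (ζ + ζ⁻¹ - 2) * ζ = (ζ - 1) ^ 2 by field_simp; ring, ← pow_mul, h2e,
      pow_add, sub_pow_expChar_pow, sub_pow_expChar_pow, one_pow, one_pow]
  have hprod : ζ ^ p ^ m * ζ ^ p ^ k = (ζ ^ e) ^ 2 := by rw [← pow_add, ← h2e, pow_mul']
  apply mul_right_cancel₀ (pow_ne_zero e hζ)
  rw [add_mul, hplus, hminus]
  field_simp
  linear_combination 2 * hprod

theorem injective_add_two_pow_add_sub_two_pow_of_isSquare {F K : Type*} [Field F] [Field K]
    [Algebra F K] {p m k e : ℕ} [ExpChar K p] (h2e : 2 * e = p ^ m + p ^ k) (h2 : (2 : K) ≠ 0)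
    (hsq : ∀ x : F, IsSquare (algebraMap F K x)) (hinj : Injective fun ζ : K => ζ ^ e) :
    Injective fun v : F => (v + 2) ^ e + (v - 2) ^ e := by
  have himage (v : F) : ∃ ζ : K, ζ ≠ 0 ∧ ζ + ζ⁻¹ = algebraMap F K v ∧
      algebraMap F K ((v + 2) ^ e + (v - 2) ^ e) = 2 * (ζ ^ e + (ζ ^ e)⁻¹) := by
    have hsq' := hsq (v ^ 2 - 4)
    rw [map_sub, map_pow, map_ofNat] at hsq'
    obtain ⟨ζ, hζ, hv⟩ := exists_add_inv_eq h2 hsq'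
    refine ⟨ζ, hζ, hv, ?_⟩
    rw [map_add, map_pow, map_pow, map_add, map_sub, map_ofNat, ← hv]
    exact add_inv_add_two_pow_add_sub_two_pow h2e hζ
  intro v₁ v₂ h
  obtain ⟨ζ₁, hζ₁, hv₁, himage₁⟩ := himage v₁
  obtain ⟨ζ₂, hζ₂, hv₂, himage₂⟩ := himage v₂
  have hJ : ζ₁ ^ e + (ζ₁ ^ e)⁻¹ = ζ₂ ^ e + (ζ₂ ^ e)⁻¹ := by
    apply mul_left_cancel₀ h2
    rw [← himage₁, ← himage₂]
    exact congrArg _ h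
  have hζ : ζ₁ = ζ₂ ∨ ζ₁ = ζ₂⁻¹ := by
    rw [add_inv_eq_add_inv_iff (pow_ne_zero _ hζ₁) (pow_ne_zero _ hζ₂), ← inv_pow] at hJ
    exact hJ.imp (fun h => hinj h) (fun h => hinj h)
  apply (algebraMap F K).injective
  rw [← hv₁, ← hv₂, add_inv_eq_add_inv_iff hζ₁ hζ₂]
  exact hζ

theorem FiniteField.injective_add_two_pow_add_sub_two_pow {F : Type*} [Field F] [Fintype F]
    {p m k e : ℕ} [Fact p.Prime] [CharP F p] (hp2 : p ≠ 2) (hm : m ≠ 0) (hk : k ≠ 0)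
    (hv : padicValNat 2 k = padicValNat 2 m) (hcard : Fintype.card F = p ^ m) (he : Odd e)
    (h2e : 2 * e = p ^ m + p ^ k) : Injective fun v : F => (v + 2) ^ e + (v - 2) ^ e := by
  let K := FiniteField.Extension F p 2
  let : Fintype K := Fintype.ofFinite K
  have : CharP K p := charP_of_injective_algebraMap (algebraMap F K).injective p
  have hF : ringChar F ≠ 2 := by rwa [ringChar.eq F p]
  have hK : Fintype.card K = Fintype.card F ^ 2 := by
    simpa only [Fintype.card_eq_nat_card] using FiniteField.natCard_extension F p 2
  have hcop : e.Coprime (Fintype.card K - 1) := by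
    rw [hK, hcard]
    exact coprime_sq_sub_one_of_two_mul_eq_pow_add_pow hm hk hv he h2e
  exact injective_add_two_pow_add_sub_two_pow_of_isSquare h2e
    (Ring.two_ne_zero (Algebra.ringChar_eq F K ▸ hF))
    (FiniteField.isSquare_algebraMap_of_card_eq_sq hF hK)
    (FiniteField.pow_injective_of_coprime he.pos.ne' hcop)

theorem injective_add_pow_add_sub_pow {F : Type*} [Field F] {e : ℕ} (h2 : (2 : F) ≠ 0)
    (hinj₂ : Injective fun v : F => (v + 2) ^ e + (v - 2) ^ e) {t : F} (ht : t ≠ 0) :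
    Injective fun v : F => (v + t) ^ e + (v - t) ^ e := by
  have hscale (v : F) :
      (v + t) ^ e + (v - t) ^ e = (t / 2) ^ e * ((2 * v / t + 2) ^ e + (2 * v / t - 2) ^ e) := by
    rw [mul_add, ← mul_pow, ← mul_pow]
    congr 2 <;> field_simp
  intro v₁ v₂ h
  simp only [hscale] at h
  have := hinj₂ (mul_left_cancel₀ (pow_ne_zero _ (div_ne_zero ht h2)) h)
  field_simp at this
  exact this

theorem injective_add_pow_add_pow {F : Type*} [Field F] (h2 : (2 : F) ≠ 0) {d e : ℕ}
    (he : Odd e) (hde : ∀ x : F, (x ^ d) ^ e = x)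
    (hinj : ∀ t : F, t ≠ 0 → Injective fun v : F => (v + t) ^ e + (v - t) ^ e) (a : F) :
    Injective fun x : F => (x + a) ^ d + x ^ d := by
  intro x y hxy
  obtain ⟨s, hs⟩ : ∃ s, (x + a) ^ d + x ^ d = s := ⟨_, rfl⟩
  by_cases hs0 : s = 0
  · subst hs0
    have hroot (z : F) (hz : (z + a) ^ d + z ^ d = 0) : 2 * z = -a := by
      have := congrArg (· ^ e) (eq_neg_of_add_eq_zero_left hz)
      simp only [hde, he.neg_pow] at this
      linear_combination this
    exact mul_left_cancel₀ h2 ((hroot x hs).trans (hroot y (hxy.symm.trans hs)).symm)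
  · obtain ⟨t, ht⟩ : ∃ t, 2 * t = s := ⟨s / 2, mul_div_cancel₀ s h2⟩
    have hshift (z : F) (hz : (z + a) ^ d + z ^ d = s) :
        (t - z ^ d + t) ^ e + (t - z ^ d - t) ^ e = a := by
      rw [show t - z ^ d + t = (z + a) ^ d by linear_combination ht - hz,
        show t - z ^ d - t = -z ^ d by ring, he.neg_pow, hde, hde]
      ring
    have ht0 : t ≠ 0 := by rintro rfl; exact hs0 (by rw [← ht, mul_zero])
    have := hinj t ht0 ((hshift x hs).trans (hshift y (hxy.symm.trans hs)).symm)
    rw [← hde x, ← hde y, sub_right_inj.mp this]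

theorem stmt_10_general (p m k d : ℕ) (hp : p.Prime) (hodd : Odd p) (hm : 0 < m) (hk : 0 < k)
    (h1m : p ^ m % 4 = 1) (hv : padicValNat 2 k = padicValNat 2 m)
    (hcong : d * ((p ^ k + 1) / 2) ≡ (p ^ m + 1) / 2 [MOD p ^ m - 1])
    (F : Type*) [Field F] [Fintype F] (hcard : Fintype.card F = p ^ m) :
    ∀ a b : F, ∃! x : F, (x + a) ^ d + x ^ d = b := by
  have := Fact.mk hp
  have : CharP F p := charP_of_card_eq_prime_pow hcard
  have hk4 : p ^ k % 4 = 1 := (pow_mod_four_eq_of_padicValNat_eq hodd hm.ne' hk.ne' hv).trans h1m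
  set c := (p ^ m - 1) / 2
  set r := (p ^ k + 1) / 2
  rw [show p ^ m - 1 = 2 * c by omega, show (p ^ m + 1) / 2 = c + 1 by omega] at hcong
  have hd : Odd d := Nat.odd_of_mul_modEq_add_one (Nat.even_iff.mpr (by omega)) hcong
  have he : Odd (c + r) := Nat.odd_iff.mpr (by omega)
  have hde (x : F) : (x ^ d) ^ (c + r) = x := by
    refine FiniteField.pow_pow_eq_self_of_mul_modEq_one (mul_ne_zero hd.pos.ne' he.pos.ne') ?_ x
    rw [hcard, show p ^ m - 1 = 2 * c by omega]
    exact Nat.mul_add_modEq_one hd hcong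
  have hp2 : p ≠ 2 := by rintro rfl; exact Nat.not_even_iff_odd.mpr hodd even_two
  have h2 : (2 : F) ≠ 0 := Ring.two_ne_zero (by rwa [ringChar.eq F p])
  have hG := FiniteField.injective_add_two_pow_add_sub_two_pow hp2 hm.ne' hk.ne' hv hcard he
    (by omega)
  intro a b
  exact (injective_add_pow_add_pow h2 he hde (fun t ht => injective_add_pow_add_sub_pow h2 hG ht)
    a).bijective_of_finite.existsUnique b

theorem stmt_10 (p m k d : ℕ) (hp : p.Prime) (hodd : Odd p) (hm : 0 < m) (hk : 0 < k)
    (hd0 : 0 < d) (h1m : p ^ m % 4 = 1) (hv : padicValNat 2 k = padicValNat 2 m)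
    (hcong : d * ((p ^ k + 1) / 2) ≡ (p ^ m + 1) / 2 [MOD p ^ m - 1])
    (F : Type*) [Field F] [Fintype F] (hcard : Fintype.card F = p ^ m) :
    ∀ a b : F, ∃! x : F, (x + a) ^ d + x ^ d = b :=
  stmt_10_general p m k d hp hodd hm hk h1m hv hcong F hcard
end

section
/- Let p be an odd prime with p^m ≡ 1 (mod 4) and d a positive integer satisfying d·(p^k+1)/2 ≡ (p^m+1)/2 (mod p^m - 1) for some positive integer k. Then gcd(d, p^m - 1) = 1 and d is odd. -/
/-!
Any common divisor of `d` and `p ^ m - 1` divides `d * ((p ^ k + 1) / 2)`, hence `(p ^ m + 1) / 2`.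
Writing `p ^ m = 4t + 1`, the numbers `(p ^ m + 1) / 2 = 2t + 1` and `p ^ m - 1 = 2 ^ 2 * t` are
coprime, so `gcd d (p ^ m - 1) = 1`; as `p ^ m - 1` is even, `d` is odd.
-/

theorem Nat.gcd_dvd_of_mul_modEq {d x c n : ℕ} (h : d * x ≡ c [MOD n]) : Nat.gcd d n ∣ c :=
  (h.dvd_iff (Nat.gcd_dvd_right d n)).mp ((Nat.gcd_dvd_left d n).mul_right x)

theorem Nat.coprime_add_one_div_two_sub_one {a : ℕ} (ha : a % 4 = 1) :
    Nat.Coprime ((a + 1) / 2) (a - 1) := by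
  obtain ⟨t, rfl⟩ : ∃ t, a = 4 * t + 1 := ⟨a / 4, by omega⟩
  rw [show (4 * t + 1 + 1) / 2 = 2 * t + 1 by omega, show 4 * t + 1 - 1 = 2 ^ 2 * t by omega,
    Nat.coprime_mul_iff_right, Nat.coprime_pow_right_iff two_pos]
  simp

theorem stmt_11_general (p m k d : ℕ) (h1m : p ^ m % 4 = 1)
    (hcong : d * ((p ^ k + 1) / 2) ≡ (p ^ m + 1) / 2 [MOD p ^ m - 1]) :
    Nat.gcd d (p ^ m - 1) = 1 ∧ Odd d := by
  have hcop : Nat.Coprime d (p ^ m - 1) :=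
    Nat.eq_one_of_dvd_coprimes (Nat.coprime_add_one_div_two_sub_one h1m)
      (Nat.gcd_dvd_of_mul_modEq hcong) (Nat.gcd_dvd_right d _)
  have htwo : 2 ∣ p ^ m - 1 := by omega
  exact ⟨hcop, Nat.coprime_two_right.mp (hcop.coprime_dvd_right htwo)⟩

theorem stmt_11 (p m k d : ℕ) (hp : p.Prime) (hodd : Odd p) (hm : 0 < m) (hk : 0 < k)
    (hd0 : 0 < d) (h1m : p ^ m % 4 = 1)
    (hcong : d * ((p ^ k + 1) / 2) ≡ (p ^ m + 1) / 2 [MOD p ^ m - 1]) :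
    Nat.gcd d (p ^ m - 1) = 1 ∧ Odd d :=
  stmt_11_general p m k d h1m hcong
end

section
/- Let p be an odd prime, m, k positive integers with v_2(m) ≤ v_2(k), and c ∈ GF(p^m) with c ≠ 1 and c^{p^k - 1} = 1. Set a = 1/(1-c). Then for each b ∈ GF(p^m), the number of solutions x ∈ GF(p^m) of (x+1)^{p^k+1} - c·x^{p^k+1} = b equals the number of solutions y of y^{p^k+1} = a^2 - a + a·b, which is 0, 1, or 2 according as a^2 - a + ab is a nonsquare, zero, or a nonzero square in GF(p^m). Consequently the c-differential spectrum of x^{p^k+1} at a = 1 is ω_0 = (p^m-1)/2, ω_1 = 1, ω_2 = (p^m-1)/2. -/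
/-!
Since `a ^ p ^ k = a` and `a * (1 - c) = 1`, the translation `x ↦ x + a` turns
`(x + 1) ^ (p ^ k + 1) - c * x ^ (p ^ k + 1) = b` into `y ^ (p ^ k + 1) = a ^ 2 - a + a * b`.
The condition `v₂(m) ≤ v₂(k)` makes `gcd(2k, m)` divide `k`; a `(p ^ k + 1)`-th root of unity `z`
satisfies `z ^ p ^ (2k) = z` and `z ^ p ^ m = z`, so it is fixed by the `k`-th power of Frobenius,
whence `z ^ 2 = 1`. So `y ↦ y ^ (p ^ k + 1)` and squaring have the same kernel on `Fˣ`, hence the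
same image, and the fibres of the former are counted like square roots. As `b ↦ a ^ 2 - a + a * b`
is a bijection, the spectrum is that of the squares of `F`.
-/

open scoped Classical

open Function

theorem Nat.gcd_two_mul_dvd_of_padicValNat_le {m k : ℕ} (hm : m ≠ 0)
    (hv : padicValNat 2 m ≤ padicValNat 2 k) : (2 * k).gcd m ∣ k := by
  rcases eq_or_ne k 0 with rfl | hk
  · simp
  rw [← Nat.factorization_le_iff_dvd (Nat.gcd_ne_zero_right hm) hk,
    Nat.factorization_gcd (by positivity) hm, Nat.factorization_mul two_ne_zero hk]
  intro q
  rcases eq_or_ne q 2 with rfl | hq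
  · simp only [Finsupp.inf_apply, Nat.factorization_def _ Nat.prime_two]
    exact inf_le_right.trans hv
  · simp [Nat.prime_two.factorization, hq.symm]

theorem sq_eq_one_of_pow_prime_pow_add_one_eq_one {F : Type*} [Field F] [Fintype F] {p m k : ℕ}
    [Fact p.Prime] [CharP F p] (hcard : Fintype.card F = p ^ m) (hkm : (2 * k).gcd m ∣ k)
    {z : F} (hz : z ^ (p ^ k + 1) = 1) : z ^ 2 = 1 := by
  have hinv : z ^ p ^ k = z⁻¹ := eq_inv_of_mul_eq_one_left (by rwa [← pow_succ])
  have h2k : IsPeriodicPt (frobenius F p) (2 * k) z := by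
    rw [IsPeriodicPt, IsFixedPt, iterate_frobenius, two_mul, pow_add, pow_mul, hinv, inv_pow,
      hinv, inv_inv]
  have hm : IsPeriodicPt (frobenius F p) m z := by
    rw [IsPeriodicPt, IsFixedPt, iterate_frobenius, ← hcard, FiniteField.pow_card]
  have hk : z ^ p ^ k = z := by
    simpa only [IsPeriodicPt, IsFixedPt, iterate_frobenius] using (h2k.gcd hm).trans_dvd hkm
  rwa [pow_succ, hk, ← sq] at hz

theorem range_powMonoidHom_eq_of_ker_eq {G : Type*} [CommGroup G] [Finite G] {n d : ℕ}
    (hnd : n ∣ d) (hker : (powMonoidHom d : G →* G).ker = (powMonoidHom n).ker) :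
    (powMonoidHom d : G →* G).range = (powMonoidHom n).range := by
  obtain ⟨e, rfl⟩ := hnd
  have hle : (powMonoidHom (n * e) : G →* G).range ≤ (powMonoidHom n).range := by
    rintro _ ⟨y, rfl⟩
    exact ⟨y ^ e, by simp [← pow_mul, mul_comm]⟩
  refine Subgroup.eq_of_le_of_card_ge hle (le_of_eq ?_)
  rw [← Subgroup.index_ker, ← Subgroup.index_ker, hker]

section FiniteField

variable {F : Type*} [Field F] [Fintype F]

theorem exists_pow_eq_of_isSquare {d : ℕ} (hd : Even d)
    (hroots : ∀ z : F, z ^ d = 1 → z ^ 2 = 1) {t : F} (ht : t ≠ 0) (hsq : IsSquare t) :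
    ∃ y, y ^ d = t := by
  have hker : (powMonoidHom d : Fˣ →* Fˣ).ker = (powMonoidHom 2).ker := by
    ext z
    simp only [MonoidHom.mem_ker, powMonoidHom_apply, ← Units.val_inj, Units.val_pow_eq_pow_val,
      Units.val_one]
    refine ⟨hroots z, fun h => ?_⟩
    obtain ⟨e, rfl⟩ := even_iff_two_dvd.mp hd
    rw [pow_mul, h, one_pow]
  obtain ⟨s, rfl⟩ := hsq
  have hs : s ≠ 0 := by rintro rfl; simp at ht
  have hmem : Units.mk0 s hs ^ 2 ∈ (powMonoidHom d : Fˣ →* Fˣ).range := by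
    rw [range_powMonoidHom_eq_of_ker_eq (even_iff_two_dvd.mp hd) hker]
    exact ⟨_, rfl⟩
  obtain ⟨y, hy⟩ := hmem
  exact ⟨y, by simpa [sq] using congrArg Units.val hy⟩

theorem ncard_pow_eq (hF : ringChar F ≠ 2) {d : ℕ} (hd : Even d) (hd0 : d ≠ 0)
    (hroots : ∀ z : F, z ^ d = 1 → z ^ 2 = 1) (t : F) :
    {y : F | y ^ d = t}.ncard = if t = 0 then 1 else if IsSquare t then 2 else 0 := by
  obtain ⟨e, rfl⟩ := even_iff_two_dvd.mp hd
  split_ifs with ht hsq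
  · simp [ht, pow_eq_zero_iff hd0]
  · obtain ⟨y₀, rfl⟩ := exists_pow_eq_of_isSquare hd hroots ht hsq
    have hy₀ : y₀ ≠ 0 := by rintro rfl; simp [hd0] at ht
    have hset : {y : F | y ^ (2 * e) = y₀ ^ (2 * e)} = {y₀, -y₀} := by
      ext y
      simp only [Set.mem_ofPred_eq, Set.mem_insert_iff, Set.mem_singleton_iff,
        ← sq_eq_sq_iff_eq_or_eq_neg]
      refine ⟨fun h => ?_, fun h => by rw [pow_mul, pow_mul, h]⟩
      have := hroots (y / y₀) (by rw [div_pow, h, div_self (pow_ne_zero _ hy₀)])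
      rwa [div_pow, div_eq_one_iff_eq (pow_ne_zero _ hy₀)] at this
    rw [hset, Set.ncard_pair]
    exact fun h => hy₀ ((Ring.eq_self_iff_eq_zero_of_char_ne_two hF).mp h.symm)
  · rw [Set.ncard_eq_zero]
    ext y
    simp only [Set.mem_ofPred_eq, Set.mem_empty_iff_false, iff_false]
    rintro rfl
    exact hsq (hd.isSquare_pow y)

theorem ncard_setOf_ne_zero_isSquare (hF : ringChar F ≠ 2) :
    {t : F | t ≠ 0 ∧ IsSquare t}.ncard = (Fintype.card F - 1) / 2 := by
  have hset : {t : F | t ≠ 0 ∧ IsSquare t} =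
      Units.val '' ((powMonoidHom 2 : Fˣ →* Fˣ).range : Set Fˣ) := by
    ext t
    simp only [Set.mem_ofPred_eq, Set.mem_image, SetLike.mem_coe, MonoidHom.mem_range,
      powMonoidHom_apply]
    constructor
    · rintro ⟨ht, s, rfl⟩
      have hs : s ≠ 0 := by rintro rfl; simp at ht
      exact ⟨Units.mk0 s hs ^ 2, ⟨_, rfl⟩, by simp [sq]⟩
    · rintro ⟨_, ⟨u, rfl⟩, rfl⟩
      exact ⟨by simp, u, by simp [sq]⟩
  have hodd := FiniteField.odd_card_of_char_ne_two hF
  rw [hset, Set.ncard_image_of_injective _ Units.val_injective, ← Nat.card_coe_set_eq,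
    SetLike.coe_sort_coe, IsCyclic.card_powMonoidHom_range, Nat.card_eq_fintype_card,
    Fintype.card_units, Nat.gcd_eq_right]
  omega

theorem ncard_setOf_not_isSquare (hF : ringChar F ≠ 2) :
    {t : F | ¬IsSquare t}.ncard = (Fintype.card F - 1) / 2 := by
  have hsq : {t : F | IsSquare t}.ncard = (Fintype.card F - 1) / 2 + 1 := by
    have hset : {t : F | IsSquare t} = insert 0 {t : F | t ≠ 0 ∧ IsSquare t} := by
      ext t
      by_cases ht : t = 0 <;> simp [ht]
    rw [hset, Set.ncard_insert_of_notMem (by simp), ncard_setOf_ne_zero_isSquare hF]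
  have hcard := Set.ncard_add_ncard_compl {t : F | IsSquare t}
  rw [hsq, Nat.card_eq_fintype_card] at hcard
  have hodd := FiniteField.odd_card_of_char_ne_two hF
  change {t : F | IsSquare t}ᶜ.ncard = _
  omega

theorem ncard_fiber_spectrum (hF : ringChar F ≠ 2) (f : F → F) (T : F ≃ F)
    (hf : ∀ b, {x | f x = b}.ncard = if T b = 0 then 1 else if IsSquare (T b) then 2 else 0) :
    {b | {x | f x = b}.ncard = 0}.ncard = (Fintype.card F - 1) / 2 ∧
    {b | {x | f x = b}.ncard = 1}.ncard = 1 ∧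
    {b | {x | f x = b}.ncard = 2}.ncard = (Fintype.card F - 1) / 2 := by
  have hT (S : Set F) : {b | T b ∈ S}.ncard = S.ncard :=
    Set.ncard_preimage_of_injective_subset_range T.injective (by simp)
  simp_rw [hf]
  refine ⟨?_, ?_, ?_⟩
  · convert hT {t | ¬IsSquare t} using 2
    · ext b
      by_cases h : T b = 0 <;> simp [h]
    · exact (ncard_setOf_not_isSquare hF).symm
  · convert hT {0} using 2
    · ext b
      by_cases h : T b = 0 <;> simp [h, apply_ite (· = 1)]
    · simp
  · convert hT {t | t ≠ 0 ∧ IsSquare t} using 2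
    · ext b
      by_cases h : T b = 0 <;> simp [h]
    · exact (ncard_setOf_ne_zero_isSquare hF).symm

end FiniteField

theorem add_pow_expChar_pow_succ_eq {R : Type*} [CommRing R] {p : ℕ} [ExpChar R p] (k : ℕ)
    {a c : R} (ha : a ^ p ^ k = a) (hac : a * (1 - c) = 1) (x : R) :
    (x + a) ^ (p ^ k + 1) = a ^ 2 - a + a * ((x + 1) ^ (p ^ k + 1) - c * x ^ (p ^ k + 1)) := by
  rw [pow_succ (x + a), pow_succ (x + 1), pow_succ x, add_pow_expChar_pow, add_pow_expChar_pow, one_pow, ha]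
  linear_combination (-(x ^ p ^ k * x)) * hac

theorem ncard_fiber_eq_ncard_pow {F : Type*} [Field F] {p : ℕ} [ExpChar F p] (k : ℕ)
    {a c : F} (ha : a ^ p ^ k = a) (hac : a * (1 - c) = 1) (b : F) :
    {x : F | (x + 1) ^ (p ^ k + 1) - c * x ^ (p ^ k + 1) = b}.ncard =
      {y : F | y ^ (p ^ k + 1) = a ^ 2 - a + a * b}.ncard := by
  have ha0 : a ≠ 0 := left_ne_zero_of_mul_eq_one hac
  have hset : {x : F | (x + 1) ^ (p ^ k + 1) - c * x ^ (p ^ k + 1) = b} =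
      (· + a) ⁻¹' {y : F | y ^ (p ^ k + 1) = a ^ 2 - a + a * b} := by
    ext x
    simp [add_pow_expChar_pow_succ_eq k ha hac x, ha0]
  rw [hset, Set.ncard_preimage_of_injective_subset_range (add_left_injective a)
    fun y _ => ⟨y - a, sub_add_cancel y a⟩]

theorem stmt_13_general (p m k : ℕ) (hp : p.Prime) (hodd : Odd p) (hm : 0 < m)
    (hv : padicValNat 2 m ≤ padicValNat 2 k)
    (F : Type*) [Field F] [Fintype F] (hcard : Fintype.card F = p ^ m)
    (c : F) (hc1 : c ≠ 1) (hck : c ^ (p ^ k - 1) = 1)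
    (a : F) (ha : a = 1 / (1 - c)) :
    (∀ b : F,
      ({x : F | (x + 1) ^ (p ^ k + 1) - c * x ^ (p ^ k + 1) = b}).ncard =
        ({y : F | y ^ (p ^ k + 1) = a ^ 2 - a + a * b}).ncard ∧
      ({y : F | y ^ (p ^ k + 1) = a ^ 2 - a + a * b}).ncard =
        (if a ^ 2 - a + a * b = 0 then 1
         else if IsSquare (a ^ 2 - a + a * b) then 2 else 0)) ∧
    ({b : F | ({x : F | (x + 1) ^ (p ^ k + 1) - c * x ^ (p ^ k + 1) = b}).ncard = 0}).ncard
      = (p ^ m - 1) / 2 ∧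
    ({b : F | ({x : F | (x + 1) ^ (p ^ k + 1) - c * x ^ (p ^ k + 1) = b}).ncard = 1}).ncard
      = 1 ∧
    ({b : F | ({x : F | (x + 1) ^ (p ^ k + 1) - c * x ^ (p ^ k + 1) = b}).ncard = 2}).ncard
      = (p ^ m - 1) / 2 := by
  have := Fact.mk hp
  have := charP_of_card_eq_prime_pow (R := F) hcard
  have hF : ringChar F ≠ 2 := by
    rw [ringChar.eq F p]
    rintro rfl
    exact Nat.not_odd_iff_even.mpr even_two hodd
  have hroots (z : F) : z ^ (p ^ k + 1) = 1 → z ^ 2 = 1 :=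
    sq_eq_one_of_pow_prime_pow_add_one_eq_one hcard
      (Nat.gcd_two_mul_dvd_of_padicValNat_le hm.ne' hv)
  have hcq : c ^ p ^ k = c := by
    rw [← Nat.sub_add_cancel (Nat.one_le_pow k p hp.pos), pow_succ, hck, one_mul]
  have hac : a * (1 - c) = 1 := by rw [ha, one_div_mul_cancel (sub_ne_zero.mpr hc1.symm)]
  have haq : a ^ p ^ k = a := by rw [ha, div_pow, one_pow, sub_pow_expChar_pow, one_pow, hcq]
  have hfiber (b : F) := ncard_fiber_eq_ncard_pow k haq hac b
  have hcount (b : F) := ncard_pow_eq hF hodd.pow.add_one (by positivity) hroots (a ^ 2 - a + a * b)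
  refine ⟨fun b => ⟨hfiber b, hcount b⟩, ?_⟩
  rw [← hcard]
  exact ncard_fiber_spectrum hF _
    ((Equiv.mulLeft₀ a (left_ne_zero_of_mul_eq_one hac)).trans (Equiv.addLeft (a ^ 2 - a)))
    fun b => (hfiber b).trans (hcount b)

theorem stmt_13 (p m k : ℕ) (hp : p.Prime) (hodd : Odd p) (hm : 0 < m) (hk : 0 < k)
    (hv : padicValNat 2 m ≤ padicValNat 2 k)
    (F : Type*) [Field F] [Fintype F] (hcard : Fintype.card F = p ^ m)
    (c : F) (hc1 : c ≠ 1) (hck : c ^ (p ^ k - 1) = 1)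
    (a : F) (ha : a = 1 / (1 - c)) :
    (∀ b : F,
      ({x : F | (x + 1) ^ (p ^ k + 1) - c * x ^ (p ^ k + 1) = b}).ncard =
        ({y : F | y ^ (p ^ k + 1) = a ^ 2 - a + a * b}).ncard ∧
      ({y : F | y ^ (p ^ k + 1) = a ^ 2 - a + a * b}).ncard =
        (if a ^ 2 - a + a * b = 0 then 1
         else if IsSquare (a ^ 2 - a + a * b) then 2 else 0)) ∧
    ({b : F | ({x : F | (x + 1) ^ (p ^ k + 1) - c * x ^ (p ^ k + 1) = b}).ncard = 0}).ncard
      = (p ^ m - 1) / 2 ∧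
    ({b : F | ({x : F | (x + 1) ^ (p ^ k + 1) - c * x ^ (p ^ k + 1) = b}).ncard = 1}).ncard
      = 1 ∧
    ({b : F | ({x : F | (x + 1) ^ (p ^ k + 1) - c * x ^ (p ^ k + 1) = b}).ncard = 2}).ncard
      = (p ^ m - 1) / 2 :=
  stmt_13_general p m k hp hodd hm hv F hcard c hc1 hck a ha
end

section
/- Let p be an odd prime with p^k ≡ 3 (mod 4) and p^m ≡ 3 (mod 4), and let b ∈ {1, -1} ⊆ GF(p^m). Then there are no pairs (x, y) ∈ (GF(p^m)^*)^2 satisfying simultaneously x^2 + y^2 = 1 and x^{p^k+1} - y^{p^k+1} = -b^{(p^k+1)/2}. -/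
/-!
The Frobenius `z ↦ z ^ q`, `q = p ^ k`, maps the point `(x, y)` of the circle `x² + y² = 1`
to another point `(X, Y)` of it. Since `q ≡ 3 [MOD 4]`, the right-hand side `-b ^ ((q + 1) / 2)`
is `-1`, so the second equation reads `x X - y Y = -1`, and the Brahmagupta–Fibonacci identity
`(x X - y Y)² + (x Y + y X)² = (x² + y²)(X² + Y²)` forces `x Y + y X = 0`. Dividing by `x y`
gives `x ^ (q - 1) = -y ^ (q - 1)` with `q - 1` even, so `-1` is a square in `GF(p ^ m)`, which
is impossible as `p ^ m ≡ 3 [MOD 4]`.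
-/

theorem sq_add_sq_pow_expChar_pow {R : Type*} [CommRing R] (p : ℕ) [ExpChar R p] (n : ℕ)
    {x y : R} (h : x ^ 2 + y ^ 2 = 1) : (x ^ p ^ n) ^ 2 + (y ^ p ^ n) ^ 2 = 1 := by
  rw [← pow_right_comm, ← pow_right_comm y, ← add_pow_expChar_pow, h, one_pow]

theorem mul_add_mul_eq_zero_of_sq_add_sq_eq_one {R : Type*} [CommRing R] [NoZeroDivisors R]
    {x y u v : R} (hxy : x ^ 2 + y ^ 2 = 1) (huv : u ^ 2 + v ^ 2 = 1)
    (h : (x * u - y * v) ^ 2 = 1) : x * v + y * u = 0 := by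
  have brahmagupta :
      (x * u - y * v) ^ 2 + (x * v + y * u) ^ 2 = (x ^ 2 + y ^ 2) * (u ^ 2 + v ^ 2) := by
    ring
  rw [h, hxy, huv] at brahmagupta
  exact pow_eq_zero_iff two_ne_zero |>.mp (by linear_combination brahmagupta)

theorem isSquare_neg_one_of_mul_pow_add_mul_pow_eq_zero {K : Type*} [Field K] {x y : K}
    (hx : x ≠ 0) (hy : y ≠ 0) {q : ℕ} (hq : Odd q) (h : x * y ^ q + y * x ^ q = 0) :
    IsSquare (-1 : K) := by
  obtain ⟨s, rfl⟩ := hq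
  have hpow : x ^ (2 * s) = -y ^ (2 * s) := by
    have : x * y * (x ^ (2 * s) + y ^ (2 * s)) = 0 := by linear_combination h
    linear_combination (mul_eq_zero.mp this).resolve_left (mul_ne_zero hx hy)
  refine ⟨(x / y) ^ s, ?_⟩
  rw [← sq, ← pow_mul, mul_comm, div_pow, hpow, neg_div, div_self (pow_ne_zero _ hy)]

theorem stmt_17_general (p m k : ℕ) (hp : p.Prime)
    (h3k : p ^ k % 4 = 3) (h3m : p ^ m % 4 = 3)
    (F : Type*) [Field F] [Fintype F] (hcard : Fintype.card F = p ^ m)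
    (b : F) (hb : b = 1 ∨ b = -1) :
    ¬ ∃ x y : F, x ≠ 0 ∧ y ≠ 0 ∧ x ^ 2 + y ^ 2 = 1 ∧
      x ^ (p ^ k + 1) - y ^ (p ^ k + 1) = -b ^ ((p ^ k + 1) / 2) := by
  have := Fact.mk hp
  have := charP_of_card_eq_prime_pow hcard
  rintro ⟨x, y, hx, hy, hcircle, heq⟩
  have hb_pow : b ^ ((p ^ k + 1) / 2) = 1 := by
    have heven : Even ((p ^ k + 1) / 2) := ⟨(p ^ k + 1) / 4, by omega⟩
    rcases hb with rfl | rfl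
    · exact one_pow _
    · exact heven.neg_one_pow
  have hconj : x * y ^ p ^ k + y * x ^ p ^ k = 0 := by
    refine mul_add_mul_eq_zero_of_sq_add_sq_eq_one hcircle
      (sq_add_sq_pow_expChar_pow p k hcircle) ?_
    rw [hb_pow, pow_succ, pow_succ] at heq
    linear_combination (x * x ^ p ^ k - y * y ^ p ^ k - 1) * heq
  have hsq := isSquare_neg_one_of_mul_pow_add_mul_pow_eq_zero hx hy
    (Nat.odd_iff.mpr (by omega)) hconj
  rw [FiniteField.isSquare_neg_one_iff, hcard] at hsq
  exact hsq h3m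

theorem stmt_17 (p m k : ℕ) (hp : p.Prime) (hodd : Odd p) (hm : 0 < m) (hk : 0 < k)
    (h3k : p ^ k % 4 = 3) (h3m : p ^ m % 4 = 3)
    (F : Type*) [Field F] [Fintype F] (hcard : Fintype.card F = p ^ m)
    (b : F) (hb : b = 1 ∨ b = -1) :
    ¬ ∃ x y : F, x ≠ 0 ∧ y ≠ 0 ∧ x ^ 2 + y ^ 2 = 1 ∧
      x ^ (p ^ k + 1) - y ^ (p ^ k + 1) = -b ^ ((p ^ k + 1) / 2) :=
  stmt_17_general p m k hp h3k h3m F hcard b hb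
end

section
/- Let p be an odd prime with p^k ≡ 3 (mod 4) and p^m ≡ 3 (mod 4), and let b ∈ GF(p^m). It is impossible that there exist simultaneously (x₂, y₂) ∈ (GF(p^m)^*)² with x₂² - y₂² = 1, x₂^{p^k+1} + y₂^{p^k+1} = -b^{(p^k+1)/2} and (x₃, y₃) ∈ (GF(p^m)^*)² with x₃² - y₃² = -1, x₃^{p^k+1} + y₃^{p^k+1} = b^{(p^k+1)/2}. -/
/-!
Put `q = p ^ k` and `s = (x₂ + y₂) ^ (q + 1)`, `w = (x₃ + y₃) ^ (q + 1)`. Since `x ↦ x ^ q` is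
additive, `(x + y) ^ (q + 1) + (x - y) ^ (q + 1) = 2 (x ^ (q + 1) + y ^ (q + 1))`, and
`(x - y) ^ (q + 1) = (x + y) ^ (-(q + 1))` because `(x + y)(x - y) = ±1` and `q + 1` is even.
Hence `s + s⁻¹ = -2 b ^ ((q + 1) / 2)` and `w + w⁻¹ = 2 b ^ ((q + 1) / 2)`, so
`0 = s + s⁻¹ + w + w⁻¹ = (s + w)(s w + 1) / (s w)`. Both `s` and `w` are nonzero squares, so either
`-1 = w / s` or `-1 = s w` is a square, which is false in a field of order `≡ 3 (mod 4)`.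
-/

theorem add_pow_expChar_pow_succ_add_sub_pow {F : Type*} [Field F] (p : ℕ) [ExpChar F p]
    (k : ℕ) (x y : F) :
    (x + y) ^ (p ^ k + 1) + (x - y) ^ (p ^ k + 1) = 2 * (x ^ (p ^ k + 1) + y ^ (p ^ k + 1)) := by
  rw [pow_succ, pow_succ, add_pow_expChar_pow, sub_pow_expChar_pow, pow_succ, pow_succ]
  ring

theorem add_pow_add_inv_eq_of_sq_sub_sq_pow_eq_one {F : Type*} [Field F] (p : ℕ) [ExpChar F p]
    (k : ℕ) {x y : F} (h : (x ^ 2 - y ^ 2) ^ (p ^ k + 1) = 1) :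
    (x + y) ^ (p ^ k + 1) + ((x + y) ^ (p ^ k + 1))⁻¹ = 2 * (x ^ (p ^ k + 1) + y ^ (p ^ k + 1)) := by
  have hprod : (x + y) ^ (p ^ k + 1) * (x - y) ^ (p ^ k + 1) = 1 := by
    rw [← mul_pow, ← h]
    ring
  rw [← add_pow_expChar_pow_succ_add_sub_pow p, inv_eq_of_mul_eq_one_right hprod]

theorem isSquare_neg_one_of_add_inv_add_add_inv_eq_zero {F : Type*} [Field F] {s w : F}
    (hs : IsSquare s) (hw : IsSquare w) (hs0 : s ≠ 0) (hw0 : w ≠ 0)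
    (h : s + s⁻¹ + (w + w⁻¹) = 0) : IsSquare (-1 : F) := by
  have hfactor : (s + w) * (s * w + 1) = 0 := by
    field_simp at h
    linear_combination h
  obtain ⟨a, rfl⟩ := hs
  obtain ⟨c, rfl⟩ := hw
  have ha : a ≠ 0 := by rintro rfl; simp at hs0
  rcases mul_eq_zero.mp hfactor with hsum | hprod
  · exact ⟨c / a, by field_simp; linear_combination -hsum⟩
  · exact ⟨a * c, by linear_combination -hprod⟩

theorem stmt_18_general (p m k : ℕ) (hp : p.Prime)
    (h3k : p ^ k % 4 = 3) (h3m : p ^ m % 4 = 3)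
    (F : Type*) [Field F] [Fintype F] (hcard : Fintype.card F = p ^ m)
    (b : F) :
    ¬ ((∃ x₂ y₂ : F, x₂ ≠ 0 ∧ y₂ ≠ 0 ∧ x₂ ^ 2 - y₂ ^ 2 = 1 ∧
          x₂ ^ (p ^ k + 1) + y₂ ^ (p ^ k + 1) = -b ^ ((p ^ k + 1) / 2)) ∧
        (∃ x₃ y₃ : F, x₃ ≠ 0 ∧ y₃ ≠ 0 ∧ x₃ ^ 2 - y₃ ^ 2 = -1 ∧
          x₃ ^ (p ^ k + 1) + y₃ ^ (p ^ k + 1) = b ^ ((p ^ k + 1) / 2))) := by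
  rintro ⟨⟨x₂, y₂, -, -, hd₂, hs₂⟩, ⟨x₃, y₃, -, -, hd₃, hs₃⟩⟩
  have : Fact p.Prime := ⟨hp⟩
  have : CharP F p := charP_of_card_eq_prime_pow hcard
  have : ExpChar F p := ExpChar.prime hp
  have heven : Even (p ^ k + 1) := ⟨(p ^ k + 1) / 2, by omega⟩
  have hs := add_pow_add_inv_eq_of_sq_sub_sq_pow_eq_one p k (x := x₂) (y := y₂)
    (by rw [hd₂, one_pow])
  have hw := add_pow_add_inv_eq_of_sq_sub_sq_pow_eq_one p k (x := x₃) (y := y₃)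
    (by rw [hd₃, heven.neg_one_pow])
  have hx₂y₂ : x₂ + y₂ ≠ 0 := fun h0 => by simp [show y₂ = -x₂ by linear_combination h0] at hd₂
  have hx₃y₃ : x₃ + y₃ ≠ 0 := fun h0 => by simp [show y₃ = -x₃ by linear_combination h0] at hd₃
  refine (FiniteField.isSquare_neg_one_iff.mp ?_) (hcard ▸ h3m)
  refine isSquare_neg_one_of_add_inv_add_add_inv_eq_zero (heven.isSquare_pow _)
    (heven.isSquare_pow _) (pow_ne_zero _ hx₂y₂) (pow_ne_zero _ hx₃y₃) ?_
  rw [hs, hw, hs₂, hs₃]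
  ring

theorem stmt_18 (p m k : ℕ) (hp : p.Prime) (hodd : Odd p) (hm : 0 < m) (hk : 0 < k)
    (h3k : p ^ k % 4 = 3) (h3m : p ^ m % 4 = 3)
    (F : Type*) [Field F] [Fintype F] (hcard : Fintype.card F = p ^ m)
    (b : F) :
    ¬ ((∃ x₂ y₂ : F, x₂ ≠ 0 ∧ y₂ ≠ 0 ∧ x₂ ^ 2 - y₂ ^ 2 = 1 ∧
          x₂ ^ (p ^ k + 1) + y₂ ^ (p ^ k + 1) = -b ^ ((p ^ k + 1) / 2)) ∧
        (∃ x₃ y₃ : F, x₃ ≠ 0 ∧ y₃ ≠ 0 ∧ x₃ ^ 2 - y₃ ^ 2 = -1 ∧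
          x₃ ^ (p ^ k + 1) + y₃ ^ (p ^ k + 1) = b ^ ((p ^ k + 1) / 2))) :=
  stmt_18_general p m k hp h3k h3m F hcard b
end
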